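/- arXiv:1904.09231 — 6 statements merged into one kernel-verified Lean document; each statement's English description precedes it below -/
import Mathlib

section
/- For strict, transitively closed episodes G and H, G ∼ H if and only if G and H have identical nodes and E(G) = E(H). -/
open scoped Classical

/-- An episode: a finite directed acyclic graph with nodes drawn from `ℕ`,
labelled by symbols of an alphabet `α`. -/
structure Episode (α : Type*) where
  nodes : Finset ℕ
  edge : ℕ → ℕ → Prop
  lab : ℕ → α
  edge_mem : ∀ ⦃x y : ℕ⦄, edge x y → x ∈ nodes ∧ y ∈ nodes

namespace Episode

variable {α : Type*}

/-- Transitively closed: whenever there is a directed path from `u` to `v`,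
`(u,v)` is an edge. -/
def TransClosed (G : Episode α) : Prop :=
  ∀ ⦃u v : ℕ⦄, Relation.TransGen G.edge u v → G.edge u v

/-- Acyclic: no directed cycles. -/
def Acyclic (G : Episode α) : Prop := ∀ v : ℕ, ¬ Relation.TransGen G.edge v v

/-- Strict: any two distinct nodes sharing the same label are joined by a
directed path. -/
def Strict (G : Episode α) : Prop :=
  ∀ u ∈ G.nodes, ∀ v ∈ G.nodes, u ≠ v → G.lab u = G.lab v →
    Relation.TransGen G.edge u v ∨ Relation.TransGen G.edge v u

/-- The class `𝒮` of strict, transitively closed (acyclic) episodes. -/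
def inS (G : Episode α) : Prop := G.Acyclic ∧ G.TransClosed ∧ G.Strict

/-- A sequence `s` covers an episode `G`: there is an injective map from the
nodes of `G` to indices of `s` matching labels and respecting edges. -/
def Covers (s : List α) (G : Episode α) : Prop :=
  ∃ f : {v // v ∈ G.nodes} → Fin s.length,
    Function.Injective f ∧ (∀ v, s.get (f v) = G.lab v.1) ∧
      ∀ u v, G.edge u.1 v.1 → f u < f v

/-- `f` witnesses that `s` is an instance of `G`: a bijective valid mapping. -/
def IsInstanceMap (s : List α) (G : Episode α)
    (f : {v // v ∈ G.nodes} → Fin s.length) : Prop :=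
  Function.Bijective f ∧ (∀ v, s.get (f v) = G.lab v.1) ∧
    ∀ u v, G.edge u.1 v.1 → f u < f v

/-- The subgraph of `H` induced on a set `U` of nodes. -/
def restrict (H : Episode α) (U : Finset ℕ) : Episode α where
  nodes := U
  edge := fun x y => x ∈ U ∧ y ∈ U ∧ H.edge x y
  lab := H.lab
  edge_mem := by rintro x y ⟨h1, h2, -⟩; exact ⟨h1, h2⟩

/-- `G ⪯ H`: `G` is a subepisode of `H`.  There is a subgraph of `H` with as
many nodes as `G` such that every sequence covering that subgraph covers `G`. -/
def Subep (G H : Episode α) : Prop :=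
  ∃ U : Finset ℕ, U ⊆ H.nodes ∧ U.card = G.nodes.card ∧
    ∀ s : List α, Covers s (H.restrict U) → Covers s G

/-- `G ≺ H`: proper subepisode. -/
def ProperSubep (G H : Episode α) : Prop := Subep G H ∧ ¬ Subep H G

/-- `G ∼ H`: every sequence covers `G` iff it covers `H`. -/
def Equivalent (G H : Episode α) : Prop := ∀ s : List α, Covers s G ↔ Covers s H

/-- The nodes of `G` are `0, …, card − 1` listed in the canonical order:
labels increase, and nodes with equal labels are ordered by the edges. -/
def CanonicallyIndexed [LinearOrder α] (G : Episode α) : Prop :=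
  G.nodes = Finset.range G.nodes.card ∧
    ∀ u ∈ G.nodes, ∀ v ∈ G.nodes, u < v →
      G.lab u < G.lab v ∨ (G.lab u = G.lab v ∧ G.edge u v)

/-- An occurrence (instance) of `G` inside `s` whose span is smaller than the
window size `ρ`: an injective valid mapping with `max f − min f < ρ`. -/
def IsOcc (s : List α) (ρ : ℕ) (G : Episode α)
    (f : {v // v ∈ G.nodes} → Fin s.length) : Prop :=
  Function.Injective f ∧ (∀ v, s.get (f v) = G.lab v.1) ∧
    (∀ u v, G.edge u.1 v.1 → f u < f v) ∧
    ∀ u v, (f u : ℕ) < (f v : ℕ) + ρ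

/-- `G` occurs in `s` within some window of length at most `ρ`. -/
def Occurs (s : List α) (ρ : ℕ) (G : Episode α) : Prop := ∃ f, IsOcc s ρ G f

/-- The symbol `x` occurs in `s` inside the interval `[min f, max f]` of an
occurrence `f`. -/
def SymInWindow (s : List α) {G : Episode α}
    (f : {v // v ∈ G.nodes} → Fin s.length) (x : α) : Prop :=
  ∃ i : Fin s.length, s.get i = x ∧ (∃ u, f u ≤ i) ∧ ∃ v, i ≤ f v

/-- The node closure `cl_N`: augment `G` with one new isolated node labelled
`x` for each symbol `x` of `s`, not labelling a node of `G`, that occurs inside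
the interval of every occurrence of `G` (with span `< ρ`). -/
noncomputable def clN [LinearOrder α] (s : List α) (ρ : ℕ) (G : Episode α) :
    Episode α :=
  let newLabs : List α := (s.toFinset.filter
      (fun x => (∀ f, IsOcc s ρ G f → SymInWindow s f x) ∧
        ∀ v ∈ G.nodes, G.lab v ≠ x)).sort (· ≤ ·)
  let base : ℕ := G.nodes.sup id + 1
  { nodes := G.nodes ∪ (Finset.range newLabs.length).image (fun i => base + i)
    edge := G.edge
    lab := fun v =>
      if h : base ≤ v ∧ v - base < newLabs.length ∧ v ∉ G.nodes then
        newLabs.get ⟨v - base, h.2.1⟩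
      else G.lab v
    edge_mem := by
      intro x y h
      exact ⟨Finset.mem_union_left _ (G.edge_mem h).1,
        Finset.mem_union_left _ (G.edge_mem h).2⟩ }

/-- The edge closure `cl_E`: the maximal episode covered by all instances of
`G` in `s` with span `< ρ`; it has an edge `(x,y)` whenever the (unique) valid
mapping of every such instance places `x` before `y`. -/
def clE (s : List α) (ρ : ℕ) (G : Episode α) : Episode α where
  nodes := G.nodes
  edge := fun x y => ∃ (hx : x ∈ G.nodes) (hy : y ∈ G.nodes),
    ∀ f, IsOcc s ρ G f → f ⟨x, hx⟩ < f ⟨y, hy⟩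
  lab := G.lab
  edge_mem := by rintro x y ⟨hx, hy, -⟩; exact ⟨hx, hy⟩

/-- The `i`-closure `icl(G) = cl_E(cl_N(G))`. -/
noncomputable def icl [LinearOrder α] (s : List α) (ρ : ℕ) (G : Episode α) :
    Episode α :=
  clE s ρ (clN s ρ G)

/-- The window `s[a, b]` (0-based, inclusive endpoints). -/
def window (s : List α) (a b : ℕ) : List α := (s.take (b + 1)).drop a

/-- `s[a,b]` is a minimal window of `G` in `s`: it covers `G` and no proper
subwindow of it covers `G`. -/
def IsMinimalWindow (s : List α) (G : Episode α) (a b : ℕ) : Prop :=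
  a ≤ b ∧ b < s.length ∧ Covers (window s a b) G ∧
    ∀ a' b', a ≤ a' → b' ≤ b → a' ≤ b' → (a', b') ≠ (a, b) →
      ¬ Covers (window s a' b') G

/-- Fixed-window frequency: the number of windows of length `ρ` (indexed by
their right endpoints, windows may stick out of the sequence) covering `G`. -/
noncomputable def freqF (s : List α) (ρ : ℕ) (G : Episode α) : ℕ :=
  ((Finset.range (s.length + ρ - 1)).filter
    (fun b => Covers (window s (b + 1 - ρ) b) G)).card

/-- Disjoint-window frequency: the maximal number of pairwise disjoint
intervals of length at most `ρ` whose windows cover `G`. -/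
noncomputable def freqD (s : List α) (ρ : ℕ) (G : Episode α) : ℕ :=
  sSup {n : ℕ | ∃ I : Fin n → ℕ × ℕ,
    (∀ i, (I i).1 ≤ (I i).2 ∧ (I i).2 < (I i).1 + ρ ∧ (I i).2 < s.length ∧
      Covers (window s (I i).1 (I i).2) G) ∧
    ∀ i j, i ≠ j → (I i).2 < (I j).1 ∨ (I j).2 < (I i).1}

/-- `G` is f-closed w.r.t. the fixed-window frequency. -/
noncomputable def FClosedF (s : List α) (ρ : ℕ) (G : Episode α) : Prop :=
  ¬ ∃ H : Episode α, inS H ∧ ProperSubep G H ∧ freqF s ρ H = freqF s ρ G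

/-- `G` is f-closed w.r.t. the disjoint-window frequency. -/
noncomputable def FClosedD (s : List α) (ρ : ℕ) (G : Episode α) : Prop :=
  ¬ ∃ H : Episode α, inS H ∧ ProperSubep G H ∧ freqD s ρ H = freqD s ρ G

/-- `G − e`: remove an edge. -/
def eraseEdge (G : Episode α) (e : ℕ × ℕ) : Episode α where
  nodes := G.nodes
  edge := fun x y => G.edge x y ∧ (x, y) ≠ e
  lab := G.lab
  edge_mem := by rintro x y ⟨h, -⟩; exact G.edge_mem h

/-- `G − v`: remove a node together with all incident edges. -/
def eraseNode (G : Episode α) (w : ℕ) : Episode α where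
  nodes := G.nodes.erase w
  edge := fun x y => G.edge x y ∧ x ≠ w ∧ y ≠ w
  lab := G.lab
  edge_mem := by
    rintro x y ⟨h, hx, hy⟩
    exact ⟨Finset.mem_erase.mpr ⟨hx, (G.edge_mem h).1⟩,
      Finset.mem_erase.mpr ⟨hy, (G.edge_mem h).2⟩⟩

/-- `G + e`: add an edge. -/
def addEdge (G : Episode α) (e : ℕ × ℕ) : Episode α where
  nodes := G.nodes ∪ {e.1, e.2}
  edge := fun x y => G.edge x y ∨ (x, y) = e
  lab := G.lab
  edge_mem := by
    rintro x y (h | h)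
    · exact ⟨Finset.mem_union_left _ (G.edge_mem h).1,
        Finset.mem_union_left _ (G.edge_mem h).2⟩
    · cases h
      exact ⟨Finset.mem_union_right _ (by simp), Finset.mem_union_right _ (by simp)⟩

/-- A skeleton edge: an edge `(v,w)` such that there is no two-step path
`v → u → w`. -/
def IsSkeletonEdge (G : Episode α) (e : ℕ × ℕ) : Prop :=
  G.edge e.1 e.2 ∧ ¬ ∃ u, G.edge e.1 u ∧ G.edge u e.2

/-- A proper skeleton edge: a skeleton edge whose endpoints carry different
labels. -/
def IsProperSkeletonEdge (G : Episode α) (e : ℕ × ℕ) : Prop :=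
  IsSkeletonEdge G e ∧ G.lab e.1 ≠ G.lab e.2

/-- The set of edges of `G`, as a set of pairs. -/
def edgeSet (G : Episode α) : Set (ℕ × ℕ) := {p | G.edge p.1 p.2}

/-- Lexicographic order on edges (using the canonical order of the nodes). -/
def edgeLT (e f : ℕ × ℕ) : Prop := e.1 < f.1 ∨ (e.1 = f.1 ∧ e.2 < f.2)

/-- `e` is the last (lexicographically largest) proper skeleton edge of `G`. -/
def IsLastEdge (G : Episode α) (e : ℕ × ℕ) : Prop :=
  IsProperSkeletonEdge G e ∧
    ∀ f, IsProperSkeletonEdge G f → f = e ∨ edgeLT f e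

/-- A solitary node: a node with no incident edges. -/
def Solitary (G : Episode α) (v : ℕ) : Prop :=
  v ∈ G.nodes ∧ ∀ u, ¬ G.edge u v ∧ ¬ G.edge v u

/-- A source node: a node with no incoming edges. -/
def IsSource (G : Episode α) (v : ℕ) : Prop := v ∈ G.nodes ∧ ∀ u, ¬ G.edge u v

/-- A proper skeleton edge `e` of `G` is derivable if `G ⪯ icl(G − e)`. -/
noncomputable def DerivableEdge [LinearOrder α] (s : List α) (ρ : ℕ)
    (G : Episode α) (e : ℕ × ℕ) : Prop :=
  IsProperSkeletonEdge G e ∧ Subep G (icl s ρ (G.eraseEdge e))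

/-- A solitary node `v` of `G` is derivable if `G ⪯ icl(G − v)`. -/
noncomputable def DerivableNode [LinearOrder α] (s : List α) (ρ : ℕ)
    (G : Episode α) (v : ℕ) : Prop :=
  Solitary G v ∧ Subep G (icl s ρ (G.eraseNode v))

/-- `GreedyFrom s t G f`: `f` is the greedy mapping of `G` in the suffix of `s`
starting at (0-based) position `t`, recording absolute indices of `s`:
repeatedly map the source node of `G` whose label has the earliest remaining
occurrence to that position, and recurse on the episode with that node
removed and the part of the sequence after that position. -/
inductive GreedyFrom (s : List α) : ℕ → Episode α → (ℕ → ℕ) → Prop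
  | empty (t : ℕ) (G : Episode α) (f : ℕ → ℕ) (hG : G.nodes = ∅) :
      GreedyFrom s t G f
  | step (t : ℕ) (G : Episode α) (f : ℕ → ℕ) (v k : ℕ)
      (hv : G.IsSource v) (ht : t ≤ k) (hk : k < s.length)
      (hlab : s.get ⟨k, hk⟩ = G.lab v)
      (hmin : ∀ j (hj : j < s.length), t ≤ j → j < k →
        ¬ ∃ w, G.IsSource w ∧ s.get ⟨j, hj⟩ = G.lab w)
      (hfv : f v = k)
      (hrec : GreedyFrom s (k + 1) (G.eraseNode v) f) :
      GreedyFrom s t G f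

/-- One step of removing a derivable proper skeleton edge or a derivable
solitary node. -/
noncomputable def RemStep [LinearOrder α] (s : List α) (ρ : ℕ) :
    Episode α → Episode α → Prop := fun G G' =>
  (∃ e, DerivableEdge s ρ G e ∧ G' = G.eraseEdge e) ∨
  (∃ v, DerivableNode s ρ G v ∧ G' = G.eraseNode v)

end Episode

/-!
A topological sort of an episode in `𝒮` is a sequence with one symbol per node that covers it.
Covering it by the equivalent episode forces equal node counts, and then equal multisets of
labels, which the canonical order turns into equal labels node by node. On such a sequence a
canonically indexed episode has only one valid mapping, since equally labelled nodes must be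
mapped in index order. So if `H` had an edge `x → y` missing from `G`, a topological sort of `G`
placing `y` before `x` would be covered by `H` through that same mapping, which is absurd.
-/

open Function Relation

theorem exists_list_equiv_of_isStrictOrder {ι α : Type*} [Fintype ι] (r : ι → ι → Prop)
    [IsStrictOrder ι r] (lab : ι → α) :
    ∃ (s : List α) (f : ι ≃ Fin s.length),
      (∀ v, s.get (f v) = lab v) ∧ ∀ u v, r u v → f u < f v := by
  let _ : PartialOrder ι := partialOrderOfSO r
  let _ : Fintype (LinearExtension ι) := inferInstanceAs (Fintype ι)
  let o := (Fintype.orderIsoFinOfCardEq (LinearExtension ι) rfl).symm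
  let e : ι ≃ Fin (Fintype.card ι) := o.toEquiv
  let s := List.ofFn (lab ∘ e.symm)
  refine ⟨s, e.trans (finCongr List.length_ofFn.symm), fun v => by simp [s],
    fun u v huv => ?_⟩
  have hle : toLinearExtension u ≤ toLinearExtension v := toLinearExtension.monotone (Or.inr huv)
  have hne : u ≠ v := fun h => irrefl u (h ▸ huv : r u u)
  exact o.strictMono (hle.lt_of_ne hne)

theorem isStrictOrder_sup_pair {ι : Type*} (r : ι → ι → Prop) [IsStrictOrder ι r] {x y : ι}
    (hne : x ≠ y) (hxy : ¬ r x y) :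
    IsStrictOrder ι fun a b => r a b ∨ (ReflGen r a y ∧ ReflGen r x b) where
  irrefl a := by
    rintro (h | ⟨hay, hxa⟩)
    · exact irrefl a h
    · rcases _root_.trans hxa hay with h | h
      exacts [hne rfl, hxy h]
  trans a b c := by
    rintro (hab | ⟨hay, hxb⟩) (hbc | ⟨hby, hxc⟩)
    · exact Or.inl (_root_.trans hab hbc)
    · exact Or.inr ⟨_root_.trans (ReflGen.single hab) hby, hxc⟩
    · exact Or.inr ⟨hay, _root_.trans hxb (ReflGen.single hbc)⟩
    · exact Or.inr ⟨hay, hxc⟩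

theorem exists_list_equiv_of_isStrictOrder_of_not_rel {ι α : Type*} [Fintype ι]
    (r : ι → ι → Prop) [IsStrictOrder ι r] (lab : ι → α) {x y : ι} (hne : x ≠ y)
    (hxy : ¬ r x y) :
    ∃ (s : List α) (f : ι ≃ Fin s.length),
      (∀ v, s.get (f v) = lab v) ∧ (∀ u v, r u v → f u < f v) ∧ f y < f x := by
  have := isStrictOrder_sup_pair r hne hxy
  obtain ⟨s, f, hfl, hfr⟩ := exists_list_equiv_of_isStrictOrder
    (fun a b => r a b ∨ (ReflGen r a y ∧ ReflGen r x b)) lab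
  exact ⟨s, f, hfl, fun u v h => hfr u v (.inl h), hfr y x (.inr ⟨.refl, .refl⟩)⟩

theorem range_comp_subtype_fiber {ι κ β : Type*} {lab : ι → β} {t : κ → β} {f : ι → κ}
    (hf : Surjective f) (hfl : ∀ v, t (f v) = lab v) (b : β) :
    Set.range (fun u : {u // lab u = b} => f u) = {i | t i = b} := by
  ext i
  constructor
  · rintro ⟨u, rfl⟩
    exact (hfl u).trans u.2
  · intro hi
    obtain ⟨u, rfl⟩ := hf i
    exact ⟨⟨u, (hfl u).symm.trans hi⟩, rfl⟩

theorem eq_of_surjective_of_strictMono_on_fibers {ι κ β : Type*} [LinearOrder ι]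
    [WellFoundedLT ι] [Preorder κ] {lab : ι → β} {t : κ → β} {f g : ι → κ}
    (hf : Surjective f) (hg : Surjective g)
    (hfl : ∀ v, t (f v) = lab v) (hgl : ∀ v, t (g v) = lab v)
    (hfm : ∀ u v, u < v → lab u = lab v → f u < f v)
    (hgm : ∀ u v, u < v → lab u = lab v → g u < g v) : f = g := by
  funext v
  have hf' : StrictMono fun u : {u // lab u = lab v} => f u :=
    fun u w huw => hfm u w huw (u.2.trans w.2.symm)
  have hg' : StrictMono fun u : {u // lab u = lab v} => g u :=
    fun u w huw => hgm u w huw (u.2.trans w.2.symm)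
  have hfg := (hf'.range_inj hg').mp
    ((range_comp_subtype_fiber hf hfl _).trans (range_comp_subtype_fiber hg hgl _).symm)
  exact congrFun hfg ⟨v, rfl⟩

theorem eqOn_of_map_range_eq {α : Type*} [LinearOrder α] {n : ℕ} {l₁ l₂ : ℕ → α}
    (h₁ : MonotoneOn l₁ (Finset.range n)) (h₂ : MonotoneOn l₂ (Finset.range n))
    (h : (Finset.range n).val.map l₁ = (Finset.range n).val.map l₂) :
    ∀ v < n, l₁ v = l₂ v := by
  have sorted : ∀ l : ℕ → α, MonotoneOn l (Finset.range n) →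
      ((List.range n).map l).Pairwise (· ≤ ·) := fun l hl =>
    List.pairwise_map.mpr <| (List.pairwise_lt_range (n := n)).imp_of_mem fun ha hb hab =>
      hl (by simpa using ha) (by simpa using hb) hab.le
  have hperm : ((List.range n).map l₁).Perm ((List.range n).map l₂) :=
    Multiset.coe_eq_coe.mp (by simpa [← Multiset.map_coe, ← Multiset.coe_range] using h)
  have heq := hperm.eq_of_pairwise' (sorted l₁ h₁) (sorted l₂ h₂)
  intro v hv
  simpa [hv] using congrArg (·[v]?) heq

namespace Episode

variable {α : Type*} {s : List α} {G H : Episode α}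

theorem Covers.card_le (h : Covers s G) : G.nodes.card ≤ s.length := by
  obtain ⟨f, hf, -⟩ := h
  simpa using Fintype.card_le_of_injective f hf

theorem Covers.of_edge_imp (h : Covers s G) (hn : G.nodes = H.nodes)
    (hl : ∀ v ∈ G.nodes, G.lab v = H.lab v) (he : ∀ x y, H.edge x y → G.edge x y) :
    Covers s H := by
  obtain ⟨f, hf, hfl, hfe⟩ := h
  let e : {v // v ∈ H.nodes} ≃ {v // v ∈ G.nodes} := Equiv.subtypeEquivRight (by simp [hn])
  exact ⟨f ∘ e, hf.comp e.injective, fun v => (hfl (e v)).trans (hl v (e v).2),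
    fun u v huv => hfe (e u) (e v) (he u v huv)⟩

theorem IsInstanceMap.covers {f} (h : IsInstanceMap s G f) : Covers s G :=
  ⟨f, h.1.1, h.2⟩

theorem IsInstanceMap.length_eq {f} (h : IsInstanceMap s G f) : s.length = G.nodes.card := by
  simpa using (Fintype.card_of_bijective h.1).symm

theorem IsInstanceMap.map_lab {f} (h : IsInstanceMap s G f) : G.nodes.val.map G.lab = s := by
  let e := Equiv.ofBijective f h.1
  calc G.nodes.val.map G.lab
      = (Finset.univ.val.map e).map s.get := by
        rw [Multiset.map_map, ← Multiset.attach_map_val G.nodes.val, Multiset.map_map]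
        exact Multiset.map_congr rfl fun v _ => (h.2.1 v).symm
    _ = s := by rw [Multiset.map_univ_val_equiv, Fin.univ_val_map, List.ofFn_get]

theorem Covers.exists_isInstanceMap (h : Covers s G) (hc : s.length = G.nodes.card) :
    ∃ f, IsInstanceMap s G f := by
  obtain ⟨f, hf, hfl, hfe⟩ := h
  exact ⟨f, (Fintype.bijective_iff_injective_and_card f).mpr ⟨hf, by simp [hc]⟩, hfl, hfe⟩

theorem inS.isStrictOrder (hG : inS G) :
    IsStrictOrder {v // v ∈ G.nodes} fun u v => G.edge u v where
  irrefl v hv := hG.1 v (.single hv)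
  trans _ _ _ huv hvw := hG.2.1 ((TransGen.single huv).tail hvw)

theorem inS.exists_isInstanceMap (hG : inS G) : ∃ s f, IsInstanceMap s G f := by
  have := hG.isStrictOrder
  obtain ⟨s, f, hfl, hfe⟩ := exists_list_equiv_of_isStrictOrder
    (fun u v : {v // v ∈ G.nodes} => G.edge u v) (G.lab ∘ (↑))
  exact ⟨s, f, f.bijective, hfl, hfe⟩

theorem card_nodes_le_of_covers (hG : inS G) (hcov : ∀ s, Covers s G → Covers s H) :
    H.nodes.card ≤ G.nodes.card := by
  obtain ⟨s, f, hf⟩ := hG.exists_isInstanceMap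
  exact hf.length_eq ▸ (hcov s hf.covers).card_le

section Canonical

variable [LinearOrder α]

theorem CanonicallyIndexed.edge_of_lt_of_lab_eq (cG : CanonicallyIndexed G) {u v : ℕ}
    (hu : u ∈ G.nodes) (hv : v ∈ G.nodes) (huv : u < v) (hl : G.lab u = G.lab v) :
    G.edge u v :=
  (cG.2 u hu v hv huv).resolve_left hl.not_lt |>.2

theorem CanonicallyIndexed.monotoneOn_lab (cG : CanonicallyIndexed G) :
    MonotoneOn G.lab G.nodes := by
  intro u hu v hv huv
  rcases huv.eq_or_lt with rfl | huv
  · rfl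
  · rcases cG.2 u hu v hv huv with h | h
    exacts [h.le, h.1.le]

theorem Equivalent.nodes_eq (hG : inS G) (hH : inS H) (cG : CanonicallyIndexed G)
    (cH : CanonicallyIndexed H) (h : Equivalent G H) : G.nodes = H.nodes := by
  have hcard := (card_nodes_le_of_covers hH fun s => (h s).mpr).antisymm
    (card_nodes_le_of_covers hG fun s => (h s).mp)
  rw [cG.1, cH.1, hcard]

theorem lab_eq_of_covers (hG : inS G) (cG : CanonicallyIndexed G) (cH : CanonicallyIndexed H)
    (hn : G.nodes = H.nodes) (hcov : ∀ s, Covers s G → Covers s H) :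
    ∀ v ∈ G.nodes, G.lab v = H.lab v := by
  obtain ⟨s, f, hf⟩ := hG.exists_isInstanceMap
  obtain ⟨g, hg⟩ := (hcov s hf.covers).exists_isInstanceMap (by rw [hf.length_eq, hn])
  obtain ⟨hGn, hHn⟩ : G.nodes = Finset.range G.nodes.card ∧
      H.nodes = Finset.range G.nodes.card := ⟨cG.1, hn ▸ cH.1⟩
  have hmap := hf.map_lab.trans hg.map_lab.symm
  rw [hGn, hHn] at hmap
  intro v hv
  refine eqOn_of_map_range_eq ?_ ?_ hmap v (Finset.mem_range.mp (hGn ▸ hv))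
  · exact hGn ▸ cG.monotoneOn_lab
  · exact hHn ▸ cH.monotoneOn_lab

theorem edge_of_covers (hG : inS G) (hH : H.Acyclic) (cG : CanonicallyIndexed G)
    (cH : CanonicallyIndexed H) (hn : G.nodes = H.nodes) (hl : ∀ v ∈ G.nodes, G.lab v = H.lab v)
    (hcov : ∀ s, Covers s G → Covers s H) {x y : ℕ} (hxy : H.edge x y) : G.edge x y := by
  by_contra hne
  let e : {v // v ∈ G.nodes} ≃ {v // v ∈ H.nodes} := Equiv.subtypeEquivRight (by simp [hn])
  let X : {v // v ∈ G.nodes} := ⟨x, hn ▸ (H.edge_mem hxy).1⟩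
  let Y : {v // v ∈ G.nodes} := ⟨y, hn ▸ (H.edge_mem hxy).2⟩
  have hXY : X ≠ Y := fun h => by
    obtain rfl : x = y := congrArg Subtype.val h
    exact hH x (.single hxy)
  have := hG.isStrictOrder
  obtain ⟨s, f, hfl, hfe, hYX⟩ := exists_list_equiv_of_isStrictOrder_of_not_rel
    (fun u v : {v // v ∈ G.nodes} => G.edge u v) (G.lab ∘ (↑)) hXY hne
  obtain ⟨g, hg⟩ := (hcov s ⟨f, f.injective, hfl, hfe⟩).exists_isInstanceMap
    (by simpa [← hn] using (Fintype.card_congr f).symm)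
  have hfg : ⇑f = g ∘ e := by
    refine eq_of_surjective_of_strictMono_on_fibers f.surjective (hg.1.2.comp e.surjective) hfl
      (fun v => (hg.2.1 (e v)).trans (hl v v.2).symm) (fun u v huv hlab => ?_)
      (fun u v huv hlab => ?_)
    · exact hfe u v (cG.edge_of_lt_of_lab_eq u.2 v.2 huv hlab)
    · have hlab' : H.lab u = H.lab v := (hl u u.2).symm.trans (hlab.trans (hl v v.2))
      exact hg.2.2 (e u) (e v) (cH.edge_of_lt_of_lab_eq (e u).2 (e v).2 huv hlab')
  rw [hfg] at hYX
  exact (hg.2.2 (e X) (e Y) hxy).asymm hYX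

end Canonical

end Episode

open Episode in
/-- For strict transitively closed (canonically indexed) episodes,
`G ∼ H` iff `G` and `H` have identical nodes and `E(G) = E(H)`. -/
theorem stmt2 {α : Type*} [LinearOrder α] (G H : Episode α)
    (hG : inS G) (hH : inS H)
    (cG : CanonicallyIndexed G) (cH : CanonicallyIndexed H) :
    Equivalent G H ↔
      (G.nodes = H.nodes ∧ (∀ v ∈ G.nodes, G.lab v = H.lab v) ∧
        ∀ x y, G.edge x y ↔ H.edge x y) := by
  have lab_symm (hn : G.nodes = H.nodes) (hl : ∀ v ∈ G.nodes, G.lab v = H.lab v) :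
      ∀ v ∈ H.nodes, H.lab v = G.lab v := fun v hv => (hl v (hn ▸ hv)).symm
  constructor
  · intro h
    have hn := h.nodes_eq hG hH cG cH
    have hl := lab_eq_of_covers hG cG cH hn fun s => (h s).mp
    exact ⟨hn, hl, fun x y =>
      ⟨edge_of_covers hH hG.1 cH cG hn.symm (lab_symm hn hl) fun s => (h s).mpr,
        edge_of_covers hG hH.1 cG cH hn hl fun s => (h s).mp⟩⟩
  · rintro ⟨hn, hl, he⟩ s
    exact ⟨fun hs => hs.of_edge_imp hn hl fun x y => (he x y).mpr,
      fun hs => hs.of_edge_imp hn.symm (lab_symm hn hl) fun x y => (he x y).mp⟩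
end

section
/- Fix a sequence s and a window size ρ, and consider strict, transitively closed episodes that occur in s within some window of length at most ρ. The node closure cl_N is an idempotent and monotonic extension operator: (1) G ⪯ cl_N(G); (2) cl_N(cl_N(G)) = cl_N(G); (3) if G ⪯ H then cl_N(G) ⪯ cl_N(H). -/
/-!
Every occurrence of `G` extends to an occurrence of `cl_N(G)` with the same span, by sending
each new node to a position of its label inside the window; hence every symbol forced into all
windows of `cl_N(G)` is already forced for `G`, and idempotence follows.

For monotonicity, let `U ⊆ H` witness `G ⪯ H`. Listing `U` in topological order gives a
sequence of length `|U|` covering `H|U`, hence `G`, so `U` carries only labels of `G`. The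
window of an occurrence of `H` covers `H|U`, hence contains an occurrence of `G`, so a symbol
forced into every window of `G` is forced into every window of `H`. Therefore each new label
of `cl_N(G)` sits on a node of `cl_N(H)` outside `U`, and adding these nodes to `U` witnesses
`cl_N(G) ⪯ cl_N(H)`.
-/

open scoped Classical

namespace Episode

variable {α : Type*}

section ValidMaps

variable {s : List α} {ρ : ℕ} {G H K : Episode α}

def IsValidMap (s : List α) (G : Episode α) (f : {v // v ∈ G.nodes} → Fin s.length) : Prop :=
  Function.Injective f ∧ (∀ v, s.get (f v) = G.lab v.1) ∧
    ∀ u v, G.edge u.1 v.1 → f u < f v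

theorem isOcc_iff {f : {v // v ∈ G.nodes} → Fin s.length} :
    IsOcc s ρ G f ↔ IsValidMap s G f ∧ ∀ u v, (f u : ℕ) < f v + ρ := by
  simp only [IsOcc, IsValidMap, and_assoc]

theorem ext (hn : G.nodes = H.nodes) (he : G.edge = H.edge) (hl : G.lab = H.lab) : G = H := by
  cases G; cases H
  cases hn; cases he; cases hl
  rfl

def IsSubgraph (G K : Episode α) : Prop :=
  G.nodes ⊆ K.nodes ∧ (∀ v ∈ G.nodes, G.lab v = K.lab v) ∧
    ∀ u v, G.edge u v → K.edge u v

theorem restrict_isSubgraph {U : Finset ℕ} (hU : U ⊆ H.nodes) : IsSubgraph (H.restrict U) H :=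
  ⟨hU, fun _ _ => rfl, fun _ _ h => h.2.2⟩

theorem Covers.of_isSubgraph (h : IsSubgraph G K) (hK : Covers s K) : Covers s G := by
  obtain ⟨f, hinj, hlab, hedge⟩ := hK
  refine ⟨fun v => f ⟨v, h.1 v.2⟩, fun v w hvw => ?_, fun v => ?_,
    fun u v huv => hedge _ _ (h.2.2 _ _ huv)⟩
  · exact Subtype.ext (Subtype.mk.inj (hinj hvw))
  · rw [hlab, h.2.1 v v.2]

theorem getElem_window {a b i : ℕ} (hi : i < (window s a b).length) :
    (window s a b)[i] =
      s[a + i]'(by simp only [window, List.length_drop, List.length_take] at hi; omega) := by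
  simp only [window, List.getElem_drop, List.getElem_take]

theorem IsValidMap.covers_window {f : {v // v ∈ G.nodes} → Fin s.length}
    (hf : IsValidMap s G f) {a b : ℕ} (ha : ∀ v, a ≤ f v) (hb : ∀ v, (f v : ℕ) ≤ b) :
    Covers (window s a b) G := by
  have hlt : ∀ v, (f v : ℕ) - a < (window s a b).length := fun v => by
    have := (f v).2; have := ha v; have := hb v
    simp only [window, List.length_drop, List.length_take]; omega
  refine ⟨fun v => ⟨f v - a, hlt v⟩, fun v w hvw => hf.1 (Fin.ext ?_), fun v => ?_,
    fun u v huv => ?_⟩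
  · have := congrArg Fin.val hvw; have := ha v; have := ha w; simp at *; omega
  · have := ha v
    simp only [List.get_eq_getElem, getElem_window, Nat.add_sub_cancel' this]
    exact hf.2.1 v
  · have := hf.2.2 u v huv; have := ha u
    simp only [Fin.lt_def] at *; omega

theorem IsValidMap.of_window {a b : ℕ} {g : {v // v ∈ G.nodes} → Fin (window s a b).length}
    (hg : IsValidMap (window s a b) G g) :
    ∃ f : {v // v ∈ G.nodes} → Fin s.length,
      IsValidMap s G f ∧ ∀ v, a ≤ (f v : ℕ) ∧ (f v : ℕ) ≤ b := by
  have hlt : ∀ v, a + g v < s.length ∧ a + g v ≤ b := fun v => by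
    have := (g v).2; simp only [window, List.length_drop, List.length_take] at this; omega
  refine ⟨fun v => ⟨a + g v, (hlt v).1⟩, ⟨fun v w hvw => hg.1 (Fin.ext ?_), fun v => ?_,
    fun u v huv => ?_⟩, fun v => ⟨Nat.le_add_right _ _, (hlt v).2⟩⟩
  · have := congrArg Fin.val hvw; simp at this; omega
  · rw [← hg.2.1 v, List.get_eq_getElem, List.get_eq_getElem, getElem_window]
  · have := hg.2.2 u v huv
    simp only [Fin.lt_def] at *; omega

theorem SymInWindow.of_le {f : {v // v ∈ G.nodes} → Fin s.length}
    {g : {v // v ∈ K.nodes} → Fin s.length} {x : α}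
    (hgf : ∀ w, ∃ u v, f u ≤ g w ∧ g w ≤ f v) (hg : SymInWindow s g x) :
    SymInWindow s f x := by
  obtain ⟨i, hi, ⟨u, hu⟩, ⟨v, hv⟩⟩ := hg
  obtain ⟨u', -, hu', -⟩ := hgf u
  obtain ⟨-, v', -, hv'⟩ := hgf v
  exact ⟨i, hi, ⟨u', hu'.trans hu⟩, ⟨v', hv.trans hv'⟩⟩

theorem nodes_nonempty_of_forall_symInWindow {x : α}
    (hx : ∀ f, IsOcc s ρ G f → SymInWindow s f x) : G.nodes.Nonempty := by
  by_contra h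
  have : IsEmpty {v // v ∈ G.nodes} := by
    rw [Finset.not_nonempty_iff_eq_empty] at h; rw [h]; infer_instance
  obtain ⟨-, -, ⟨u, -⟩, -⟩ := hx isEmptyElim
    ⟨fun u => isEmptyElim u, isEmptyElim, fun u => isEmptyElim u, fun u => isEmptyElim u⟩
  exact isEmptyElim u

theorem forall_symInWindow_of_subep {U : Finset ℕ} (hU : U ⊆ H.nodes)
    (hcard : U.card = G.nodes.card) (hcov : ∀ t, Covers t (H.restrict U) → Covers t G) {x : α}
    (hx : ∀ g, IsOcc s ρ G g → SymInWindow s g x) {f : {v // v ∈ H.nodes} → Fin s.length}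
    (hf : IsOcc s ρ H f) : SymInWindow s f x := by
  have : Nonempty {v // v ∈ H.nodes} := by
    obtain ⟨w, hw⟩ :=
      Finset.card_pos.1 (hcard ▸ (nodes_nonempty_of_forall_symInWindow hx).card_pos)
    exact ⟨⟨w, hU hw⟩⟩
  obtain ⟨u₀, hu₀⟩ := Finite.exists_min fun v => (f v : ℕ)
  obtain ⟨v₀, hv₀⟩ := Finite.exists_max fun v => (f v : ℕ)
  rw [isOcc_iff] at hf
  obtain ⟨g', hg'⟩ : ∃ g', IsValidMap _ G g' :=
    hcov _ ((hf.1.covers_window hu₀ hv₀).of_isSubgraph (restrict_isSubgraph hU))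
  obtain ⟨g, hg, hgf⟩ := hg'.of_window
  refine .of_le (fun w => ⟨u₀, v₀, (hgf w).1, (hgf w).2⟩) (hx g (isOcc_iff.2 ⟨hg, ?_⟩))
  intro u v
  have := (hgf u).2; have := (hgf v).1; have := hf.2 v₀ u₀
  omega

theorem exists_isValidMap_restrict (hH : H.Acyclic) (U : Finset ℕ) :
    ∃ (t : List α) (f : {v // v ∈ (H.restrict U).nodes} → Fin t.length),
      t.length = U.card ∧ IsValidMap t (H.restrict U) f := by
  have : IsPartialOrder ℕ (Relation.ReflTransGen H.edge) :=
    { refl := fun _ => .refl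
      trans := fun _ _ _ => .trans
      antisymm := fun a b hab hba => by
        rw [Relation.reflTransGen_iff_eq_or_transGen] at hab hba
        rcases hab with rfl | hab
        · rfl
        rcases hba with rfl | hba
        · rfl
        exact (hH a (hab.trans hba)).elim }
  obtain ⟨o, ho, hle⟩ := extend_partialOrder (Relation.ReflTransGen H.edge)
  let l := U.sort o
  have hmem : ∀ v ∈ U, v ∈ l := fun v hv => by simpa [l] using hv
  have hidx : ∀ v ∈ U, l.idxOf v < l.length := fun v hv =>
    List.idxOf_lt_length_iff.2 (hmem v hv)
  refine ⟨l.map H.lab, fun v => ⟨l.idxOf v.1, by simpa using hidx v.1 v.2⟩, by simp [l],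
    fun v w hvw => Subtype.ext ((List.idxOf_inj (hmem v.1 v.2)).1 (congrArg Fin.val hvw)),
    fun v => by simp [List.getElem_idxOf (hidx v.1 v.2)]; rfl, ?_⟩
  rintro ⟨u, hu⟩ ⟨v, hv⟩ ⟨-, -, huv⟩
  rw [Fin.mk_lt_mk]
  have hne : u ≠ v := by rintro rfl; exact hH u (.single huv)
  refine lt_of_le_of_ne (not_lt.1 fun hvu => hne ?_) ((List.idxOf_inj (hmem u hu)).not.2 hne)
  have hvu' :=
    List.pairwise_iff_getElem.1 (U.pairwise_sort o) _ _ (hidx v hv) (hidx u hu) hvu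
  rw [List.getElem_idxOf, List.getElem_idxOf] at hvu'
  exact antisymm (hle u v (.single huv)) hvu'

theorem exists_lab_eq_of_covers_restrict (hH : H.Acyclic) {U : Finset ℕ}
    (hcard : U.card = G.nodes.card) (hcov : ∀ t, Covers t (H.restrict U) → Covers t G) :
    ∀ w ∈ U, ∃ v ∈ G.nodes, G.lab v = H.lab w := by
  obtain ⟨t, p, hlen, hp⟩ := exists_isValidMap_restrict hH U
  obtain ⟨g, hg⟩ : ∃ g, IsValidMap t G g := hcov t ⟨p, hp⟩
  have hbij : Function.Bijective g :=
    (Fintype.bijective_iff_injective_and_card g).2 ⟨hg.1, by simp [hlen, hcard]⟩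
  intro w hw
  obtain ⟨v, hv⟩ := hbij.2 (p ⟨w, hw⟩)
  exact ⟨v, v.2, by rw [← hg.2.1 v, hv, hp.2.1]; rfl⟩

end ValidMaps

-- `freshBase` and `newLabels` are the `base` and `newLabs` of `clN`, so that `clN_nodes` and
-- `clN_lab` hold by `rfl`.
def freshBase (G : Episode α) : ℕ := G.nodes.sup id + 1

theorem freshBase_add_notMem (G : Episode α) (j : ℕ) : freshBase G + j ∉ G.nodes := fun h => by
  have : freshBase G + j ≤ G.nodes.sup id := Finset.le_sup (f := id) h
  unfold freshBase at this; omega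

section NodeClosure

variable [LinearOrder α] {s : List α} {ρ : ℕ} {G H : Episode α}

variable (s ρ G) in
noncomputable def newLabels : List α :=
  (s.toFinset.filter (fun x => (∀ f, IsOcc s ρ G f → SymInWindow s f x) ∧
    ∀ v ∈ G.nodes, G.lab v ≠ x)).sort (· ≤ ·)

theorem mem_newLabels {x : α} :
    x ∈ newLabels s ρ G ↔ x ∈ s.toFinset ∧ (∀ f, IsOcc s ρ G f → SymInWindow s f x) ∧
      ∀ v ∈ G.nodes, G.lab v ≠ x := by
  rw [newLabels, Finset.mem_sort, Finset.mem_filter]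

theorem nodup_newLabels : (newLabels s ρ G).Nodup := Finset.sort_nodup _ _

theorem clN_nodes : (clN s ρ G).nodes =
    G.nodes ∪ (Finset.range (newLabels s ρ G).length).image (freshBase G + ·) := rfl

theorem clN_lab (v : ℕ) : (clN s ρ G).lab v =
    if h : freshBase G ≤ v ∧ v - freshBase G < (newLabels s ρ G).length ∧ v ∉ G.nodes
    then (newLabels s ρ G).get ⟨v - freshBase G, h.2.1⟩ else G.lab v := rfl

theorem nodes_subset_clN_nodes : G.nodes ⊆ (clN s ρ G).nodes := Finset.subset_union_left

theorem freshBase_add_mem_clN_nodes {j : ℕ} (hj : j < (newLabels s ρ G).length) :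
    freshBase G + j ∈ (clN s ρ G).nodes :=
  Finset.mem_union_right _ (Finset.mem_image_of_mem _ (Finset.mem_range.2 hj))

theorem exists_eq_freshBase_add {v : ℕ} (hv : v ∈ (clN s ρ G).nodes) (h : v ∉ G.nodes) :
    ∃ j < (newLabels s ρ G).length, v = freshBase G + j := by
  simpa [clN_nodes, h, eq_comm] using hv

theorem sub_freshBase_lt {v : ℕ} (hv : v ∈ (clN s ρ G).nodes) (h : v ∉ G.nodes) :
    v - freshBase G < (newLabels s ρ G).length := by
  obtain ⟨j, hj, rfl⟩ := exists_eq_freshBase_add hv h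
  simpa using hj

theorem clN_lab_of_mem {v : ℕ} (hv : v ∈ G.nodes) : (clN s ρ G).lab v = G.lab v := by
  rw [clN_lab, dif_neg (fun h => h.2.2 hv)]

theorem clN_lab_freshBase_add {j : ℕ} (hj : j < (newLabels s ρ G).length) :
    (clN s ρ G).lab (freshBase G + j) = (newLabels s ρ G)[j] := by
  rw [clN_lab, dif_pos ⟨by omega, by omega, freshBase_add_notMem G j⟩]
  simp

theorem card_clN_nodes :
    (clN s ρ G).nodes.card = G.nodes.card + (newLabels s ρ G).length := by
  rw [clN_nodes, Finset.card_union_of_disjoint,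
    Finset.card_image_of_injective _ (add_right_injective _), Finset.card_range]
  refine Finset.disjoint_right.2 fun v hv => ?_
  obtain ⟨j, -, rfl⟩ := Finset.mem_image.1 hv
  exact freshBase_add_notMem G j

theorem exists_clN_node_notMem_lab_eq {x : α} (hx : x ∈ newLabels s ρ G) :
    ∃ w ∈ (clN s ρ G).nodes, w ∉ G.nodes ∧ (clN s ρ G).lab w = x := by
  obtain ⟨j, hj, rfl⟩ := List.getElem_of_mem hx
  exact ⟨_, freshBase_add_mem_clN_nodes hj, freshBase_add_notMem G j, clN_lab_freshBase_add hj⟩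

theorem eq_of_clN_lab_eq {v w : ℕ} (hv : v ∈ (clN s ρ G).nodes) (hw : w ∈ (clN s ρ G).nodes)
    (hvG : v ∉ G.nodes) (hl : (clN s ρ G).lab v = (clN s ρ G).lab w) : v = w := by
  obtain ⟨j, hj, rfl⟩ := exists_eq_freshBase_add hv hvG
  rw [clN_lab_freshBase_add hj] at hl
  by_cases hwG : w ∈ G.nodes
  · rw [clN_lab_of_mem hwG] at hl
    exact ((mem_newLabels.1 (List.getElem_mem hj)).2.2 w hwG hl.symm).elim
  · obtain ⟨k, hk, rfl⟩ := exists_eq_freshBase_add hw hwG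
    rw [clN_lab_freshBase_add hk, nodup_newLabels.getElem_inj_iff] at hl
    rw [hl]

noncomputable def extendMap {β : Type*} (g : {v // v ∈ G.nodes} → β)
    (p : Fin (newLabels s ρ G).length → β) : {v // v ∈ (clN s ρ G).nodes} → β := fun v =>
  if h : v.1 ∈ G.nodes then g ⟨v.1, h⟩ else p ⟨v.1 - freshBase G, sub_freshBase_lt v.2 h⟩

section extendMap

variable {β : Type*} {g : {v // v ∈ G.nodes} → β} {p : Fin (newLabels s ρ G).length → β}

theorem extendMap_of_mem {v : {v // v ∈ (clN s ρ G).nodes}} (h : v.1 ∈ G.nodes) :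
    extendMap g p v = g ⟨v.1, h⟩ := dif_pos h

theorem extendMap_freshBase_add {j : ℕ} (hj : j < (newLabels s ρ G).length) :
    extendMap g p ⟨freshBase G + j, freshBase_add_mem_clN_nodes hj⟩ = p ⟨j, hj⟩ := by
  rw [extendMap, dif_neg (freshBase_add_notMem G j)]
  simp

end extendMap

theorem isValidMap_extendMap {t : List α} {g : {v // v ∈ G.nodes} → Fin t.length}
    (hg : IsValidMap t G g) {p : Fin (newLabels s ρ G).length → Fin t.length}
    (hp : ∀ j, t.get (p j) = (newLabels s ρ G).get j) :
    IsValidMap t (clN s ρ G) (extendMap g p) := by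
  have hlab : ∀ v, t.get (extendMap g p v) = (clN s ρ G).lab v.1 := by
    rintro ⟨v, hv⟩
    by_cases h : v ∈ G.nodes
    · rw [extendMap_of_mem h, hg.2.1, clN_lab_of_mem h]
    · obtain ⟨j, hj, rfl⟩ := exists_eq_freshBase_add hv h
      rw [extendMap_freshBase_add hj, hp, clN_lab_freshBase_add hj]
      rfl
  refine ⟨fun v w hvw => ?_, hlab, fun u v huv => ?_⟩
  · have hl : (clN s ρ G).lab v.1 = (clN s ρ G).lab w.1 := by rw [← hlab, ← hlab, hvw]
    by_cases hv : v.1 ∈ G.nodes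
    · by_cases hw : w.1 ∈ G.nodes
      · rw [extendMap_of_mem hv, extendMap_of_mem hw] at hvw
        exact Subtype.ext (Subtype.mk.inj (hg.1 hvw))
      · exact Subtype.ext (eq_of_clN_lab_eq w.2 v.2 hw hl.symm).symm
    · exact Subtype.ext (eq_of_clN_lab_eq v.2 w.2 hv hl)
  · obtain ⟨hu, hv⟩ := G.edge_mem huv
    rw [extendMap_of_mem hu, extendMap_of_mem hv]
    exact hg.2.2 _ _ huv

theorem exists_isOcc_clN {f : {v // v ∈ G.nodes} → Fin s.length} (hf : IsOcc s ρ G f) :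
    ∃ F, IsOcc s ρ (clN s ρ G) F ∧ ∀ w, ∃ u v, f u ≤ F w ∧ F w ≤ f v := by
  have hsym (j : Fin (newLabels s ρ G).length) : SymInWindow s f ((newLabels s ρ G).get j) :=
    (mem_newLabels.1 (List.get_mem _ _)).2.1 f hf
  choose p hp hlo hhi using hsym
  have hbound : ∀ w, ∃ u v, f u ≤ extendMap f p w ∧ extendMap f p w ≤ f v := by
    rintro ⟨w, hw⟩
    by_cases h : w ∈ G.nodes
    · rw [extendMap_of_mem h]
      exact ⟨_, _, le_rfl, le_rfl⟩
    · obtain ⟨j, hj, rfl⟩ := exists_eq_freshBase_add hw h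
      rw [extendMap_freshBase_add hj]
      exact ⟨(hlo _).choose, (hhi _).choose, (hlo _).choose_spec, (hhi _).choose_spec⟩
  rw [isOcc_iff] at hf
  refine ⟨extendMap f p, isOcc_iff.2 ⟨isValidMap_extendMap hf.1 hp, fun u v => ?_⟩, hbound⟩
  obtain ⟨-, b, -, hb⟩ := hbound u
  obtain ⟨c, -, hc, -⟩ := hbound v
  have := hf.2 b c
  rw [Fin.le_def] at hb hc
  omega

theorem newLabels_clN : newLabels s ρ (clN s ρ G) = [] := by
  refine List.eq_nil_iff_forall_not_mem.2 fun x hx => ?_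
  obtain ⟨hxs, hwin, hnew⟩ := mem_newLabels.1 hx
  have hxG : x ∈ newLabels s ρ G := by
    refine mem_newLabels.2 ⟨hxs, fun f hf => ?_, fun v hv => ?_⟩
    · obtain ⟨F, hF, hFf⟩ := exists_isOcc_clN hf
      exact (hwin F hF).of_le hFf
    · rw [← clN_lab_of_mem hv]
      exact hnew v (nodes_subset_clN_nodes hv)
  obtain ⟨w, hw, -, hlab⟩ := exists_clN_node_notMem_lab_eq hxG
  exact hnew w hw hlab

theorem clN_eq_self_of_newLabels_eq_nil (h : newLabels s ρ G = []) : clN s ρ G = G :=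
  ext (by simp [clN_nodes, h]) rfl (funext fun v => by rw [clN_lab, dif_neg (by simp [h])])

variable (s ρ G) in
theorem clN_clN : clN s ρ (clN s ρ G) = clN s ρ G :=
  clN_eq_self_of_newLabels_eq_nil newLabels_clN

variable (s ρ G) in
theorem subep_clN : Subep G (clN s ρ G) :=
  ⟨G.nodes, nodes_subset_clN_nodes, rfl, fun _ => Covers.of_isSubgraph
    ⟨subset_rfl, fun _ hv => (clN_lab_of_mem hv).symm,
      fun _ _ h => ⟨(G.edge_mem h).1, (G.edge_mem h).2, h⟩⟩⟩

theorem restrict_isSubgraph_restrict_clN {U V : Finset ℕ} (hU : U ⊆ H.nodes) (hUV : U ⊆ V) :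
    IsSubgraph (H.restrict U) ((clN s ρ H).restrict V) :=
  ⟨hUV, fun _ hv => (clN_lab_of_mem (hU hv)).symm, fun _ _ h => ⟨hUV h.1, hUV h.2.1, h.2.2⟩⟩

theorem exists_clN_node_notMem_lab_eq_of_subep (hH : H.Acyclic) {U : Finset ℕ}
    (hU : U ⊆ H.nodes) (hcard : U.card = G.nodes.card)
    (hcov : ∀ t, Covers t (H.restrict U) → Covers t G) {x : α} (hx : x ∈ newLabels s ρ G) :
    ∃ w ∈ (clN s ρ H).nodes, w ∉ U ∧ (clN s ρ H).lab w = x := by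
  obtain ⟨hxs, hwin, hnew⟩ := mem_newLabels.1 hx
  by_cases hxH : ∃ w ∈ H.nodes, H.lab w = x
  · obtain ⟨w, hw, rfl⟩ := hxH
    refine ⟨w, nodes_subset_clN_nodes hw, fun hwU => ?_, clN_lab_of_mem hw⟩
    obtain ⟨v, hv, hvw⟩ := exists_lab_eq_of_covers_restrict hH hcard hcov w hwU
    exact hnew v hv hvw
  · push Not at hxH
    have hxH' : x ∈ newLabels s ρ H :=
      mem_newLabels.2 ⟨hxs, fun _ hf => forall_symInWindow_of_subep hU hcard hcov hwin hf, hxH⟩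
    obtain ⟨w, hw, hwH, hlab⟩ := exists_clN_node_notMem_lab_eq hxH'
    exact ⟨w, hw, fun hwU => hwH (hU hwU), hlab⟩

theorem Subep.clN (hH : H.Acyclic) (hGH : Subep G H) : Subep (clN s ρ G) (clN s ρ H) := by
  obtain ⟨U, hU, hcard, hcov⟩ := hGH
  choose w hwH hwU hwlab using fun j : Fin (newLabels s ρ G).length =>
    exists_clN_node_notMem_lab_eq_of_subep (s := s) (ρ := ρ) hH hU hcard hcov (List.get_mem _ j)
  have hw_inj : Function.Injective w := fun i j hij =>
    nodup_newLabels.get_inj_iff.1 (by rw [← hwlab, ← hwlab, hij])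
  have hwV (j) : w j ∈ U ∪ Finset.univ.image w :=
    Finset.mem_union_right _ (Finset.mem_image_of_mem _ (Finset.mem_univ j))
  refine ⟨U ∪ Finset.univ.image w, Finset.union_subset (hU.trans nodes_subset_clN_nodes)
    (Finset.image_subset_iff.2 fun j _ => hwH j), ?_, fun t ht => ?_⟩
  · rw [Finset.card_union_of_disjoint, Finset.card_image_of_injective _ hw_inj,
      Finset.card_univ, Fintype.card_fin, hcard, card_clN_nodes]
    refine Finset.disjoint_right.2 fun v hv => ?_
    obtain ⟨j, -, rfl⟩ := Finset.mem_image.1 hv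
    exact hwU j
  · obtain ⟨f, hf⟩ : ∃ f, IsValidMap t _ f := ht
    obtain ⟨g, hg⟩ : ∃ g, IsValidMap t G g :=
      hcov t ((show Covers t _ from ⟨f, hf⟩).of_isSubgraph
        (restrict_isSubgraph_restrict_clN hU Finset.subset_union_left))
    exact ⟨extendMap g fun j => f ⟨w j, hwV j⟩,
      isValidMap_extendMap hg fun j => by rw [hf.2.1]; exact hwlab j⟩

end NodeClosure

end Episode

open Episode in
theorem stmt3_general {α : Type*} [LinearOrder α] (s : List α) (ρ : ℕ)
    (G H : Episode α) (hH : inS H) :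
    Subep G (clN s ρ G) ∧
    clN s ρ (clN s ρ G) = clN s ρ G ∧
    (Subep G H → Subep (clN s ρ G) (clN s ρ H)) :=
  ⟨subep_clN s ρ G, clN_clN s ρ G, fun h => h.clN hH.1⟩

open Episode in
/-- The node closure `cl_N` is an idempotent and monotonic extension operator
on strict transitively closed episodes occurring in `s` within a window of
length at most `ρ`. -/
theorem stmt3 {α : Type*} [LinearOrder α] (s : List α) (ρ : ℕ)
    (G H : Episode α) (hG : inS G) (hH : inS H)
    (hGocc : Occurs s ρ G) (hHocc : Occurs s ρ H) :
    Subep G (clN s ρ G) ∧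
    clN s ρ (clN s ρ G) = clN s ρ G ∧
    (Subep G H → Subep (clN s ρ G) (clN s ρ H)) :=
  stmt3_general s ρ G H hH
end

section
/- Fix a sequence s and a window size ρ, and consider strict, transitively closed episodes that occur in s within some window of length at most ρ. The edge closure cl_E is an idempotent and monotonic extension operator: (1) G ⪯ cl_E(G); (2) cl_E(cl_E(G)) = cl_E(G); (3) if G ⪯ H then cl_E(G) ⪯ cl_E(H). -/
open scoped Classical

/-!
`cl_E(G)` only adds edges that every occurrence of `G` already respects, so `G` and `cl_E(G)` have
the same occurrences; this gives extension and idempotence.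

For monotonicity, note that in a strict episode each label class is a chain, so a node is
determined by its label and its rank in that chain. If `G ⪯ H` via the node set `U`, every
occurrence `f` of `H` induces, through the subsequence that `f` picks out on `U`, a
label-preserving bijection `μ_f` from the nodes of `G` onto `U` such that `f ∘ μ_f` is an
occurrence of `G`. Strictness of `G` and `H` forces `μ_f` to respect the chains, hence the ranks,
so `μ_f = μ` does not depend on `f`. An edge of `cl_E(G)` is therefore respected by `f ∘ μ` for
every occurrence `f` of `H`, i.e. it is mapped by `μ` to an edge of `cl_E(H)`.
-/

theorem List.exists_subsequence_of_injective {α ι : Type*} [Fintype ι] (s : List α)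
    (g : ι → Fin s.length) (hg : Function.Injective g) :
    ∃ (w : List α) (c : ι ≃ Fin w.length),
      (∀ i, w.get (c i) = s.get (g i)) ∧ ∀ i j, c i < c j ↔ g i < g j := by
  let σ := Fintype.orderIsoFinOfCardEq (Set.range g) rfl
  refine ⟨List.ofFn fun k => s.get (σ k),
    (Equiv.ofInjective g hg).trans (σ.symm.toEquiv.trans (finCongr List.length_ofFn.symm)),
    fun i => by simp, fun i j => ?_⟩
  simp only [Equiv.trans_apply, finCongr_apply, Fin.cast_lt_cast, OrderIso.coe_toEquiv,
    OrderIso.lt_iff_lt, Equiv.ofInjective_apply]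
  exact Iff.rfl

namespace Episode

variable {α : Type*}

section EdgeClosure

variable (s : List α) (ρ : ℕ) (G : Episode α)

theorem edge_clE_of_edge {x y : ℕ} (h : G.edge x y) : (clE s ρ G).edge x y :=
  ⟨(G.edge_mem h).1, (G.edge_mem h).2, fun _ hf => hf.2.2.1 ⟨x, _⟩ ⟨y, _⟩ h⟩

theorem subep_clE : Subep G (clE s ρ G) :=
  ⟨G.nodes, subset_rfl, rfl, fun _ ⟨g, hg, hlab, hedge⟩ =>
    ⟨g, hg, hlab, fun u v h => hedge u v ⟨u.2, v.2, edge_clE_of_edge s ρ G h⟩⟩⟩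

theorem isOcc_clE_iff (f : {v // v ∈ G.nodes} → Fin s.length) :
    IsOcc s ρ (clE s ρ G) f ↔ IsOcc s ρ G f :=
  ⟨fun ⟨hinj, hlab, hedge, hwin⟩ =>
    ⟨hinj, hlab, fun u v h => hedge u v (edge_clE_of_edge s ρ G h), hwin⟩,
   fun hf => ⟨hf.1, hf.2.1, fun _ _ ⟨_, _, h⟩ => h f hf, hf.2.2.2⟩⟩

theorem clE_clE : clE s ρ (clE s ρ G) = clE s ρ G := by
  unfold clE
  congr 1
  funext x y
  exact propext <| exists_congr fun _ => exists_congr fun _ =>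
    forall_congr' fun f => imp_congr_left (isOcc_clE_iff s ρ G f)

end EdgeClosure

theorem inS.restrict {H : Episode α} (hH : inS H) {U : Finset ℕ} (hU : U ⊆ H.nodes) :
    inS (H.restrict U) := by
  obtain ⟨hac, htc, hst⟩ := hH
  have htc' : (H.restrict U).TransClosed := by
    intro u v huv
    induction huv with
    | single h => exact h
    | tail _ h ih => exact ⟨ih.1, h.2.1, htc (.tail (.single ih.2.2) h.2.2)⟩
  refine ⟨fun v hv => hac v (Relation.TransGen.mono (fun _ _ h => h.2.2) _ _ hv), htc', ?_⟩
  intro u hu v hv hne hl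
  exact (hst u (hU hu) v (hU hv) hne hl).imp (fun h => .single ⟨hu, hv, htc h⟩)
    (fun h => .single ⟨hv, hu, htc h⟩)

noncomputable def labelRank (G : Episode α) (v : ℕ) : ℕ :=
  (G.nodes.filter fun u => G.lab u = G.lab v ∧ G.edge u v).card

theorem labelRank_lt_labelRank {G : Episode α} (hac : G.Acyclic) (htc : G.TransClosed)
    {u v : ℕ} (h : G.edge u v) (hl : G.lab u = G.lab v) : labelRank G u < labelRank G v := by
  refine Finset.card_lt_card <| (Finset.ssubset_iff_of_subset ?_).2
    ⟨u, Finset.mem_filter.2 ⟨(G.edge_mem h).1, hl, h⟩, fun hu => hac u (.single ?_)⟩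
  · intro w hw
    obtain ⟨hwG, hwl, hwu⟩ := Finset.mem_filter.1 hw
    exact Finset.mem_filter.2 ⟨hwG, hwl.trans hl, htc (.tail (.single hwu) h)⟩
  · exact (Finset.mem_filter.1 hu).2.2

theorem inS.eq_of_labelRank_eq {G : Episode α} (hG : inS G) {u v : ℕ} (hu : u ∈ G.nodes)
    (hv : v ∈ G.nodes) (hl : G.lab u = G.lab v) (hr : labelRank G u = labelRank G v) :
    u = v := by
  obtain ⟨hac, htc, hst⟩ := hG
  by_contra hne
  rcases hst u hu v hv hne hl with h | h
  · exact (labelRank_lt_labelRank hac htc (htc h) hl).ne hr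
  · exact (labelRank_lt_labelRank hac htc (htc h) hl.symm).ne' hr

def IsChainIso (G K : Episode α) (μ : {v // v ∈ G.nodes} ≃ {v // v ∈ K.nodes}) : Prop :=
  (∀ a, K.lab (μ a) = G.lab a) ∧
    ∀ a b : {v // v ∈ G.nodes}, G.lab a = G.lab b → (K.edge (μ a) (μ b) ↔ G.edge a b)

namespace IsChainIso

variable {G K : Episode α} {μ : {v // v ∈ G.nodes} ≃ {v // v ∈ K.nodes}}

theorem labelRank_eq (hμ : IsChainIso G K μ) (a : {v // v ∈ G.nodes}) :
    labelRank K (μ a) = labelRank G a := by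
  refine (Finset.card_bij (fun b hb => (μ ⟨b, (Finset.mem_filter.1 hb).1⟩).1) ?_ ?_ ?_).symm
  · intro b hb
    obtain ⟨hbG, hbl, hba⟩ := Finset.mem_filter.1 hb
    exact Finset.mem_filter.2
      ⟨(μ _).2, by rw [hμ.1, hμ.1, hbl], (hμ.2 ⟨b, hbG⟩ a hbl).2 hba⟩
  · intro b₁ _ b₂ _ h
    simpa using μ.injective (Subtype.ext h)
  · intro c hc
    obtain ⟨hcK, hcl, hca⟩ := Finset.mem_filter.1 hc
    obtain ⟨b, hb⟩ := μ.surjective ⟨c, hcK⟩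
    have hbl : G.lab b = G.lab a := by rw [← hμ.1, ← hμ.1, hb, hcl]
    exact ⟨b, Finset.mem_filter.2 ⟨b.2, hbl, (hμ.2 b a hbl).1 (hb ▸ hca)⟩, by simp [hb]⟩

theorem unique {ν : {v // v ∈ G.nodes} ≃ {v // v ∈ K.nodes}} (hK : inS K)
    (hμ : IsChainIso G K μ) (hν : IsChainIso G K ν) : μ = ν :=
  Equiv.ext fun a => Subtype.ext <| hK.eq_of_labelRank_eq (μ a).2 (ν a).2
    (by rw [hμ.1, hν.1]) (by rw [hμ.labelRank_eq, hν.labelRank_eq])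

end IsChainIso

theorem isChainIso_of_lt {β : Type*} [Preorder β] {G K : Episode α} (hGt : G.TransClosed)
    (hGs : G.Strict) (hKt : K.TransClosed) (hKs : K.Strict) (g : {v // v ∈ K.nodes} → β)
    (hg : ∀ u v : {v // v ∈ K.nodes}, K.edge u v → g u < g v)
    (μ : {v // v ∈ G.nodes} ≃ {v // v ∈ K.nodes}) (hlab : ∀ a, K.lab (μ a) = G.lab a)
    (hμ : ∀ a b : {v // v ∈ G.nodes}, G.edge a b → g (μ a) < g (μ b)) :
    IsChainIso G K μ := by
  refine ⟨hlab, fun a b hl => ⟨fun hK => ?_, fun hG => ?_⟩⟩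
  · have hne : a.1 ≠ b.1 := fun h => (hg _ _ hK).ne (by rw [Subtype.ext h])
    rcases hGs a a.2 b b.2 hne hl with h | h
    · exact hGt h
    · exact absurd (hμ b a (hGt h)) (hg _ _ hK).asymm
  · have hlt := hμ a b hG
    have hne : (μ a).1 ≠ (μ b).1 := fun h => hlt.ne (by rw [Subtype.ext h])
    rcases hKs _ (μ a).2 _ (μ b).2 hne (by rw [hlab, hlab, hl]) with h | h
    · exact hKt h
    · exact absurd (hg _ _ (hKt h)) hlt.asymm

theorem exists_equiv_of_covers_imp {G K : Episode α} (hcard : K.nodes.card = G.nodes.card)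
    (P : ∀ t, Covers t K → Covers t G) {s : List α} (g : {v // v ∈ K.nodes} → Fin s.length)
    (hg : Function.Injective g) (hlab : ∀ v, s.get (g v) = K.lab v)
    (hedge : ∀ u v : {v // v ∈ K.nodes}, K.edge u v → g u < g v) :
    ∃ μ : {v // v ∈ G.nodes} ≃ {v // v ∈ K.nodes}, (∀ a, K.lab (μ a) = G.lab a) ∧
      ∀ a b : {v // v ∈ G.nodes}, G.edge a b → g (μ a) < g (μ b) := by
  obtain ⟨w, c, hcw, hclt⟩ := List.exists_subsequence_of_injective s g hg
  obtain ⟨h, hinj, hhlab, hhedge⟩ :=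
    P w ⟨c, c.injective, fun v => (hcw v).trans (hlab v),
      fun u v huv => (hclt u v).2 (hedge u v huv)⟩
  have hbij : Function.Bijective h := by
    rw [Fintype.bijective_iff_injective_and_card]
    refine ⟨hinj, ?_⟩
    rw [← Fintype.card_congr c, Fintype.card_coe, Fintype.card_coe, hcard]
  refine ⟨(Equiv.ofBijective h hbij).trans c.symm, fun a => ?_, fun a b hab => ?_⟩
  · rw [← hhlab, ← hlab, ← hcw]
    simp
  · rw [← hclt]
    simpa using hhedge a b hab

section Occurrences

variable {s : List α} {ρ : ℕ}

theorem IsOcc.restrict {H : Episode α} {f : {v // v ∈ H.nodes} → Fin s.length}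
    (hf : IsOcc s ρ H f) {U : Finset ℕ} (hU : U ⊆ H.nodes) :
    IsOcc s ρ (H.restrict U) fun u => f ⟨u, hU u.2⟩ :=
  ⟨fun _ _ h => Subtype.ext (Subtype.mk.inj (hf.1 h)), fun _ => hf.2.1 _,
    fun _ _ h => hf.2.2.1 _ _ h.2.2, fun _ _ => hf.2.2.2 _ _⟩

theorem IsOcc.comp_equiv {G K : Episode α} {g : {v // v ∈ K.nodes} → Fin s.length}
    (hg : IsOcc s ρ K g) (μ : {v // v ∈ G.nodes} ≃ {v // v ∈ K.nodes})
    (hlab : ∀ a, K.lab (μ a) = G.lab a)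
    (hμ : ∀ a b : {v // v ∈ G.nodes}, G.edge a b → g (μ a) < g (μ b)) :
    IsOcc s ρ G (g ∘ μ) :=
  ⟨hg.1.comp μ.injective, fun a => (hg.2.1 (μ a)).trans (hlab a), hμ,
    fun _ _ => hg.2.2.2 _ _⟩

theorem clE_mono {G H : Episode α} (hG : inS G) (hH : inS H) (hHocc : Occurs s ρ H)
    (hGH : Subep G H) : Subep (clE s ρ G) (clE s ρ H) := by
  obtain ⟨U, hU, hcard, P⟩ := hGH
  have hK : inS (H.restrict U) := hH.restrict hU
  have chainIso : ∀ f, IsOcc s ρ H f → ∃ μ, IsChainIso G (H.restrict U) μ ∧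
      IsOcc s ρ G fun a => f ⟨μ a, hU (μ a).2⟩ := by
    intro f hf
    have hfU := hf.restrict hU
    obtain ⟨μ, hlab, hμ⟩ := exists_equiv_of_covers_imp hcard P _ hfU.1 hfU.2.1 hfU.2.2.1
    exact ⟨μ, isChainIso_of_lt hG.2.1 hG.2.2 hK.2.1 hK.2.2 _ hfU.2.2.1 μ hlab hμ,
      hfU.comp_equiv μ hlab hμ⟩
  obtain ⟨f₀, hf₀⟩ := hHocc
  obtain ⟨μ, hμ, -⟩ := chainIso f₀ hf₀
  refine ⟨U, hU, hcard, fun t ⟨g, hg, hglab, hgedge⟩ =>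
    ⟨g ∘ μ, hg.comp μ.injective, fun a => (hglab (μ a)).trans (hμ.1 a), ?_⟩⟩
  rintro a b ⟨_, _, hab⟩
  refine hgedge _ _ ⟨(μ a).2, (μ b).2, hU (μ a).2, hU (μ b).2, fun f hf => ?_⟩
  obtain ⟨ν, hν, hocc⟩ := chainIso f hf
  obtain rfl := hν.unique hK hμ
  exact hab _ hocc

end Occurrences

end Episode

open Episode in
theorem stmt4_general {α : Type*} (s : List α) (ρ : ℕ)
    (G H : Episode α) (hG : inS G) (hH : inS H)
    (hHocc : Occurs s ρ H) :
    Subep G (clE s ρ G) ∧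
    clE s ρ (clE s ρ G) = clE s ρ G ∧
    (Subep G H → Subep (clE s ρ G) (clE s ρ H)) :=
  ⟨subep_clE s ρ G, clE_clE s ρ G, fun hGH => clE_mono hG hH hHocc hGH⟩

open Episode in
/-- The edge closure `cl_E` is an idempotent and monotonic extension operator
on strict transitively closed episodes occurring in `s` within a window of
length at most `ρ`. -/
theorem stmt4 {α : Type*} (s : List α) (ρ : ℕ)
    (G H : Episode α) (hG : inS G) (hH : inS H)
    (hGocc : Occurs s ρ G) (hHocc : Occurs s ρ H) :
    Subep G (clE s ρ G) ∧
    clE s ρ (clE s ρ G) = clE s ρ G ∧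
    (Subep G H → Subep (clE s ρ G) (clE s ρ H)) :=
  stmt4_general s ρ G H hG hH hHocc
end

section
/- Let G be a strict, transitively closed episode and let s = s_1⋯s_L be a sequence. Let k be the smallest index such that s_k = lab(v) for some source node v of G (a node with no incoming edges). Then s covers G if and only if s[k+1, L] covers G − v. -/
open scoped Classical

/-!
Following edges backwards from any node of an embedding of `G` into `s` ends at a source, whose
label cannot occur before position `k`; so the whole embedding lies in `s[k, L]`. A node other
than `v` placed at `k` would share `v`'s label, hence by strictness and transitive closure be a
successor of `v`, which is absurd. So removing `v` leaves an embedding into `s[k+1, L]`; conversely,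
`v` is a source and can be put at position `k` in front of any embedding of `G − v` there.
-/

namespace Episode

variable {α : Type*} {G : Episode α} {s : List α}

theorem le_of_forall_isSource_le {β : Type*} [Preorder β] [WellFoundedLT β]
    {f : {v // v ∈ G.nodes} → β} (hf : ∀ u w, G.edge u.1 w.1 → f u < f w) {b : β}
    (hsrc : ∀ w : {v // v ∈ G.nodes}, G.IsSource w.1 → b ≤ f w)
    (w : {v // v ∈ G.nodes}) : b ≤ f w := by
  induction w using (InvImage.wf f wellFounded_lt).induction with
  | _ w ih =>
  by_cases hw : G.IsSource w.1
  · exact hsrc w hw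
  · obtain ⟨u, hu⟩ : ∃ u, G.edge u w.1 := by simpa [IsSource, w.2] using hw
    exact (ih ⟨u, (G.edge_mem hu).1⟩ (hf _ _ hu)).trans (hf _ _ hu).le

theorem edge_of_isSource_of_lab_eq (hT : G.TransClosed) (hS : G.Strict) {v w : ℕ}
    (hv : G.IsSource v) (hw : w ∈ G.nodes) (hne : w ≠ v) (hlab : G.lab w = G.lab v) :
    G.edge v w :=
  (hS w hw v hv.1 hne hlab).elim (fun h => absurd (hT h) (hv.2 w)) (fun h => hT h)

theorem covers_drop_eraseNode {f : {v // v ∈ G.nodes} → Fin s.length}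
    (hinj : Function.Injective f) (hlab : ∀ w, s.get (f w) = G.lab w.1)
    (hedge : ∀ u w, G.edge u.1 w.1 → f u < f w) {v m : ℕ}
    (hm : ∀ w : {x // x ∈ G.nodes}, w.1 ≠ v → m ≤ f w) :
    Covers (s.drop m) (G.eraseNode v) := by
  let ι (w : {x // x ∈ (G.eraseNode v).nodes}) : {x // x ∈ G.nodes} :=
    ⟨w.1, (Finset.mem_erase.1 w.2).2⟩
  have hmι (w) : m ≤ (f (ι w) : ℕ) := hm _ (Finset.mem_erase.1 w.2).1
  have hlt (w) : (f (ι w) : ℕ) - m < (s.drop m).length := by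
    have := hmι w; have := (f (ι w)).2; rw [List.length_drop]; omega
  refine ⟨fun w => ⟨f (ι w) - m, hlt w⟩, fun w₁ w₂ h => ?_, fun w => ?_, fun u w huw => ?_⟩
  · have h' : (f (ι w₁) : ℕ) = f (ι w₂) := by
      rw [Fin.mk.injEq] at h; have := hmι w₁; have := hmι w₂; omega
    exact Subtype.ext (congrArg (·.1) (hinj (Fin.ext h')))
  · simpa [List.getElem_drop, Nat.add_sub_cancel' (hmι w), eraseNode] using hlab (ι w)
  · have := hedge (ι u) (ι w) huw.1
    have := hmι u
    simp only [Fin.lt_def] at *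
    omega

theorem covers_of_covers_drop_eraseNode {v : ℕ} (hv : G.IsSource v) (k : Fin s.length)
    (hk : s.get k = G.lab v) (h : Covers (s.drop (k + 1)) (G.eraseNode v)) : Covers s G := by
  obtain ⟨g, hinj, hlab, hedge⟩ := h
  let ι (w : {x // x ∈ G.nodes}) (hw : w.1 ≠ v) : {x // x ∈ (G.eraseNode v).nodes} :=
    ⟨w.1, Finset.mem_erase.2 ⟨hw, w.2⟩⟩
  have hlt (w hw) : (k : ℕ) + 1 + g (ι w hw) < s.length := by
    have := (g (ι w hw)).2.trans_eq (List.length_drop ..); omega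
  refine ⟨fun w => if hw : w.1 = v then k else ⟨_, hlt w hw⟩, fun w₁ w₂ h => ?_, fun w => ?_,
    fun u w huw => ?_⟩
  · by_cases h₁ : w₁.1 = v <;> by_cases h₂ : w₂.1 = v
    · exact Subtype.ext (h₁.trans h₂.symm)
    all_goals simp only [h₁, h₂, dite_true, dite_false, Fin.ext_iff] at h
    · omega
    · omega
    · have : g (ι w₁ h₁) = g (ι w₂ h₂) := Fin.ext (by omega)
      exact Subtype.ext (congrArg (·.1) (hinj this))
  · by_cases hw : w.1 = v
    · simpa [hw] using hk
    · simpa [hw, List.getElem_drop, eraseNode] using hlab (ι w hw)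
  · have hw : w.1 ≠ v := fun hw => hv.2 u.1 (hw ▸ huw)
    by_cases hu : u.1 = v
    · simp only [hu, hw, dite_true, dite_false, Fin.lt_def]; omega
    · have := hedge (ι u hu) (ι w hw) ⟨huw, hu, hw⟩
      simp only [hu, hw, dite_false, Fin.lt_def] at *
      omega

end Episode

open Episode in
/-- Let `v` be a source node of a strict transitively closed episode `G`, and
let `k` be the smallest index of `s` whose symbol is the label of a source
node of `G`, with `s_k = lab(v)`.  Then `s` covers `G` iff the suffix of `s`
after position `k` covers `G − v`. -/
theorem stmt6 {α : Type*} (G : Episode α) (hG : inS G) (s : List α)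
    (v : ℕ) (hv : IsSource G v) (k : Fin s.length) (hk : s.get k = G.lab v)
    (hmin : ∀ j : Fin s.length,
      (∃ w, IsSource G w ∧ s.get j = G.lab w) → k ≤ j) :
    Covers s G ↔ Covers (s.drop ((k : ℕ) + 1)) (G.eraseNode v) := by
  refine ⟨fun ⟨f, hinj, hlab, hedge⟩ => ?_, covers_of_covers_drop_eraseNode hv k hk⟩
  have hk_le : ∀ w, k ≤ f w :=
    le_of_forall_isSource_le hedge fun w hw => hmin (f w) ⟨w.1, hw, hlab w⟩
  refine covers_drop_eraseNode hinj hlab hedge fun w hwv =>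
    lt_of_le_of_ne (hk_le w) fun hkw => ?_
  have hvw : G.edge v w := edge_of_isSource_of_lab_eq hG.2.1 hG.2.2 hv w.2 hwv
    ((hkw ▸ hlab w).symm.trans hk)
  exact (hedge ⟨v, hv.1⟩ w hvw).not_ge (hkw ▸ hk_le ⟨v, hv.1⟩)
end

section
/- Let G be a strict, transitively closed episode and let s be a sequence covering G. Let m = g(G;s) be the greedy mapping and let [a,b] be the first minimal window of G in s (the minimal window with the smallest right endpoint). Then max m = b. -/
open scoped Classical

/-!
The greedy mapping is pointwise optimal: if `c` is any valid mapping of a strict episode into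
`s[t, B]`, the first greedy position `k` is at most every position of `c` (below each node of `c`
sits a source node, and no source label occurs in `s[t, k)`), and strictness forces `c` to use
position `k` only for the greedy node. Hence all greedy positions are at most `B`, so
`max m ≤ b`. Conversely `s[0, max m]` covers `G` through `m` itself, so it contains a minimal
window, whose right endpoint is at least `b` because `[a, b]` is the first one.
-/

namespace Episode

variable {α : Type*}

section Paths

variable {G : Episode α}

lemma IsSource.not_transGen {v u : ℕ} (hv : G.IsSource v) :
    ¬ Relation.TransGen G.edge u v := by
  rw [Relation.TransGen.tail'_iff]
  rintro ⟨w, -, hwv⟩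
  exact hv.2 w hwv

lemma lt_of_transGen (c : {v // v ∈ G.nodes} → ℕ) (hc : ∀ u v, G.edge u.1 v.1 → c u < c v)
    {x y : ℕ} (hx : x ∈ G.nodes) (hy : y ∈ G.nodes) (h : Relation.TransGen G.edge x y) :
    c ⟨x, hx⟩ < c ⟨y, hy⟩ := by
  induction h with
  | single hxy => exact hc _ _ hxy
  | tail hxp hpq ih => exact (ih (G.edge_mem hpq).1).trans (hc _ _ hpq)

lemma exists_isSource_le (c : {v // v ∈ G.nodes} → ℕ)
    (hc : ∀ u v, G.edge u.1 v.1 → c u < c v) (u : {v // v ∈ G.nodes}) :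
    ∃ w : {v // v ∈ G.nodes}, G.IsSource w.1 ∧ c w ≤ c u := by
  induction hcu : c u using Nat.strong_induction_on generalizing u with
  | _ n ih =>
    by_cases hu : G.IsSource u.1
    · exact ⟨u, hu, hcu.le⟩
    · obtain ⟨x, hxu⟩ : ∃ x, G.edge x u.1 := by
        simpa [IsSource, u.2] using hu
      have hlt := hc ⟨x, (G.edge_mem hxu).1⟩ u hxu
      obtain ⟨w, hw, hwx⟩ := ih _ (hcu ▸ hlt) ⟨x, (G.edge_mem hxu).1⟩ rfl
      exact ⟨w, hw, by omega⟩

/-- No path enters a source, so removing one keeps every path between the other nodes. -/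
lemma Strict.eraseNode {v : ℕ} (hG : G.Strict) (hv : G.IsSource v) :
    (G.eraseNode v).Strict := by
  have lift : ∀ {x y}, x ≠ v → Relation.TransGen G.edge x y →
      Relation.TransGen (G.eraseNode v).edge x y := by
    intro x y hx h
    induction h with
    | single hxy => exact .single ⟨hxy, hx, fun h => hv.2 x (h ▸ hxy)⟩
    | tail hxp hpq ih =>
      exact .tail ih ⟨hpq, fun h => hv.not_transGen (h ▸ hxp),
        fun h => hv.2 _ (h ▸ hpq)⟩
  intro x hx y hy hxy hlab
  obtain ⟨hxv, hx⟩ := Finset.mem_erase.mp hx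
  obtain ⟨hyv, hy⟩ := Finset.mem_erase.mp hy
  exact (hG x hx y hy hxy hlab).imp (lift hxv) (lift hyv)

end Paths

section Greedy

variable {s : List α}

lemma GreedyFrom.isValid {t : ℕ} {G : Episode α} {m : ℕ → ℕ} (hm : GreedyFrom s t G m) :
    (∀ v ∈ G.nodes, t ≤ m v ∧ ∃ h : m v < s.length, s.get ⟨m v, h⟩ = G.lab v) ∧
    Set.InjOn m G.nodes ∧ ∀ u v, G.edge u v → m u < m v := by
  induction hm with
  | empty t G f hG =>
    exact ⟨by simp [hG], by simp [hG], fun u v h => absurd (G.edge_mem h).1 (by simp [hG])⟩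
  | step t G f v k hv ht hk hlab _ hfv _ ih =>
    obtain ⟨ih_pos, ih_inj, ih_edge⟩ := ih
    have hlater : ∀ w ∈ G.nodes, w ≠ v → k < f w := fun w hw hwv =>
      (ih_pos w (Finset.mem_erase.mpr ⟨hwv, hw⟩)).1
    refine ⟨fun w hw => ?_, fun x hx y hy hxy => ?_, fun x y hxy => ?_⟩
    · by_cases hwv : w = v
      · subst hwv; exact hfv ▸ ⟨ht, hk, hlab⟩
      · obtain ⟨hkw, hw'⟩ := ih_pos w (Finset.mem_erase.mpr ⟨hwv, hw⟩)
        exact ⟨by omega, hw'⟩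
    · by_cases hxv : x = v <;> by_cases hyv : y = v
      · exact hxv.trans hyv.symm
      · have := hlater y hy hyv; subst hxv; omega
      · have := hlater x hx hxv; subst hyv; omega
      · exact ih_inj (Finset.mem_erase.mpr ⟨hxv, hx⟩) (Finset.mem_erase.mpr ⟨hyv, hy⟩) hxy
    · have hyv : y ≠ v := fun h => hv.2 x (h ▸ hxy)
      by_cases hxv : x = v
      · have := hlater y (G.edge_mem hxy).2 hyv; subst hxv; omega
      · exact ih_edge x y ⟨hxy, hxv, hyv⟩

lemma GreedyFrom.le_of_valid {t : ℕ} {G : Episode α} {m : ℕ → ℕ} (hm : GreedyFrom s t G m)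
    (hstrict : G.Strict) (B : ℕ) (c : {v // v ∈ G.nodes} → Fin s.length)
    (hlab : ∀ v, s.get (c v) = G.lab v.1) (hord : ∀ u v, G.edge u.1 v.1 → c u < c v)
    (hbounds : ∀ v, t ≤ (c v : ℕ) ∧ (c v : ℕ) ≤ B) :
    ∀ v ∈ G.nodes, m v ≤ B := by
  induction hm with
  | empty t G f hG => simp [hG]
  | step t G f v k hv ht hk hklab hmin hfv _ ih =>
    have hord' : ∀ u w, G.edge u.1 w.1 → (c u : ℕ) < c w := hord
    have hk_le : ∀ u, k ≤ (c u : ℕ) := fun u => by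
      obtain ⟨w, hw, hwu⟩ := exists_isSource_le _ hord' u
      by_contra! hlt
      exact hmin (c w) (c w).2 (hbounds w).1 (by omega) ⟨w, hw, hlab w⟩
    have hvm : v ∈ G.nodes := hv.1
    have hk_lt : ∀ u, u.1 ≠ v → k < (c u : ℕ) := fun u huv => by
      refine lt_of_le_of_ne (hk_le u) fun hu => ?_
      have hsame : G.lab u.1 = G.lab v := by
        rw [← hlab u, ← hklab]; exact congrArg s.get (Fin.ext hu.symm)
      rcases hstrict u.1 u.2 v hvm huv hsame with h | h
      · exact hv.not_transGen h
      · have : (c ⟨v, hvm⟩ : ℕ) < c u :=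
          lt_of_transGen (fun u => (c u : ℕ)) hord' hvm u.2 h
        have := hk_le ⟨v, hvm⟩
        omega
    intro w hw
    by_cases hwv : w = v
    · subst hwv
      have := hk_le ⟨w, hw⟩
      have := (hbounds ⟨w, hw⟩).2
      omega
    · refine ih (hstrict.eraseNode hv) (fun u => c ⟨u.1, Finset.mem_of_mem_erase u.2⟩)
        (fun u => hlab _) (fun u w h => hord _ _ h.1) (fun u => ⟨?_, (hbounds _).2⟩) w
        (Finset.mem_erase.mpr ⟨hwv, hw⟩)
      exact hk_lt ⟨u.1, _⟩ (Finset.mem_erase.mp u.2).1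

end Greedy

section Windows

variable {s : List α} {G : Episode α}

lemma covers_window_iff {a b : ℕ} (hb : b < s.length) :
    Covers (window s a b) G ↔ ∃ c : {v // v ∈ G.nodes} → Fin s.length,
      Function.Injective c ∧ (∀ v, s.get (c v) = G.lab v.1) ∧
      (∀ u v, G.edge u.1 v.1 → c u < c v) ∧ ∀ v, a ≤ (c v : ℕ) ∧ (c v : ℕ) ≤ b := by
  have hlen : (window s a b).length = b + 1 - a := by simp [window]; omega
  have hget : ∀ i (hi : i < (window s a b).length),
      (window s a b).get ⟨i, hi⟩ = s.get ⟨a + i, by omega⟩ := by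
    intro i hi; simp [window]
  constructor
  · rintro ⟨f, hinj, hlab, hord⟩
    refine ⟨fun v => ⟨a + f v, by omega⟩, fun u v h => hinj ?_, fun v => ?_,
      fun u v h => ?_, fun v => ⟨by simp, by simp; omega⟩⟩
    · exact Fin.ext (Nat.add_left_cancel (congrArg Fin.val h))
    · rw [← hget, ← hlab v]
    · exact Fin.mk_lt_mk.mpr (Nat.add_lt_add_left (hord u v h) a)
  · rintro ⟨c, hinj, hlab, hord, hab⟩
    have hcv : ∀ v, a + (c v - a) = c v := fun v => by have := hab v; omega
    refine ⟨fun v => ⟨c v - a, by have := hab v; omega⟩, fun u v h => hinj ?_, fun v => ?_,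
      fun u v h => ?_⟩
    · have := hcv u; have := hcv v
      simp only [Fin.mk.injEq] at h
      exact Fin.ext (by omega)
    · rw [hget, ← hlab v]; congr 1; exact Fin.ext (hcv v)
    · have huv : (c u : ℕ) < c v := hord u v h
      have := hab u; have := hab v
      exact Fin.mk_lt_mk.mpr (by omega)

lemma exists_isMinimalWindow_le {a b : ℕ} (hab : a ≤ b) (hb : b < s.length)
    (hcov : Covers (window s a b) G) :
    ∃ a' b', a ≤ a' ∧ b' ≤ b ∧ IsMinimalWindow s G a' b' := by
  induction hn : b - a using Nat.strong_induction_on generalizing a b with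
  | _ n ih =>
    by_cases hmin : IsMinimalWindow s G a b
    · exact ⟨a, b, le_rfl, le_rfl, hmin⟩
    · obtain ⟨a', b', haa', hbb', hab', hne, hcov'⟩ : ∃ a' b', a ≤ a' ∧ b' ≤ b ∧ a' ≤ b' ∧
          (a', b') ≠ (a, b) ∧ Covers (window s a' b') G := by
        simpa [IsMinimalWindow, hab, hb, hcov] using hmin
      have hshorter : b' - a' < n := by
        have : a ≠ a' ∨ b ≠ b' := by
          by_contra! h; exact hne (by rw [h.1, h.2])
        omega
      obtain ⟨a'', b'', h1, h2, h3⟩ := ih _ hshorter hab' (by omega) hcov' rfl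
      exact ⟨a'', b'', by omega, by omega, h3⟩

lemma GreedyFrom.covers_window {t B : ℕ} {m : ℕ → ℕ} (hm : GreedyFrom s t G m)
    (hB : ∀ v ∈ G.nodes, m v ≤ B) (hBs : B < s.length) : Covers (window s t B) G := by
  obtain ⟨hpos, hinj, hord⟩ := hm.isValid
  rw [covers_window_iff hBs]
  exact ⟨fun v => ⟨m v, (hpos v v.2).2.1⟩,
    fun u v h => Subtype.ext (hinj u.2 v.2 (by simpa using h)), fun v => (hpos v v.2).2.2,
    fun u v h => hord u v h, fun v => ⟨(hpos v v.2).1, hB v v.2⟩⟩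

end Windows

end Episode

open Episode in
theorem stmt7_general {α : Type*} (G : Episode α) (hG : inS G) (s : List α)
    (hne : G.nodes.Nonempty)
    (m : ℕ → ℕ) (hm : GreedyFrom s 0 G m)
    (a b : ℕ) (hw : IsMinimalWindow s G a b)
    (hfirst : ∀ a' b', IsMinimalWindow s G a' b' → b ≤ b') :
    (∀ v ∈ G.nodes, m v ≤ b) ∧ ∃ v ∈ G.nodes, m v = b := by
  obtain ⟨-, hb, hcov, -⟩ := hw
  obtain ⟨c, -, hlab, hord, hbounds⟩ := (covers_window_iff hb).mp hcov
  have hle : ∀ v ∈ G.nodes, m v ≤ b :=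
    hm.le_of_valid hG.2.2 b c hlab hord fun v => ⟨Nat.zero_le _, (hbounds v).2⟩
  obtain ⟨v, hv, hmax⟩ := Finset.exists_max_image G.nodes m hne
  refine ⟨hle, v, hv, le_antisymm (hle v hv) ?_⟩
  have hvs : m v < s.length := (hle v hv).trans_lt hb
  obtain ⟨a', b', -, hb', hmin'⟩ :=
    exists_isMinimalWindow_le (Nat.zero_le _) hvs (hm.covers_window hmax hvs)
  exact (hfirst a' b' hmin').trans hb'

open Episode in
/-- If `s` covers a strict transitively closed episode `G`, `m` is the greedy
mapping `g(G;s)` and `[a,b]` is the first minimal window of `G` in `s`, then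
`max m = b`. -/
theorem stmt7 {α : Type*} (G : Episode α) (hG : inS G) (s : List α)
    (hcov : Covers s G) (hne : G.nodes.Nonempty)
    (m : ℕ → ℕ) (hm : GreedyFrom s 0 G m)
    (a b : ℕ) (hw : IsMinimalWindow s G a b)
    (hfirst : ∀ a' b', IsMinimalWindow s G a' b' → b ≤ b') :
    (∀ v ∈ G.nodes, m v ≤ b) ∧ ∃ v ∈ G.nodes, m v = b :=
  stmt7_general G hG s hne m hm a b hw hfirst
end

section
/- Let G be a strict, transitively closed episode, let s = s_1⋯s_L be a sequence covering G, and let k be an index such that s[k+1, L] also covers G. Set m_1 = g(G; s) and m_2 = g(G; s[k+1, L]), both taken as maps into indices of s. Then m_2(v) ≥ m_1(v) for every node v of G. -/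
open scoped Classical

/-!
The greedy mapping `g(G; s[t, L])` is the pointwise least valid mapping of `G` into `s[t, L]`.
If the greedy step maps the source `v` to `k`, a valid mapping `g` cannot use any position `< k`:
a `g`-least node mapped below `k` would be a source whose label occurs in `s[t, k-1]`.
Nor can it map another node `w` to `k`: then `w` would be a source with the label of `v`, and by
strictness and transitive closure one of the two sources would have an incoming edge.
So `g` restricts to a valid mapping of `G − v` into `s[k+1, L]`, and induction applies.
Since `g(G; s[k+1, L])` is a valid mapping into `s`, it dominates `g(G; s)`.
-/

namespace Episode

variable {α : Type*}

lemma transGen_eraseNode {G : Episode α} {w u v : ℕ}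
    (h : Relation.TransGen (G.eraseNode w).edge u v) :
    Relation.TransGen G.edge u v ∧ u ≠ w ∧ v ≠ w := by
  induction h with
  | single h => exact ⟨.single h.1, h.2.1, h.2.2⟩
  | tail _ h ih => exact ⟨ih.1.tail h.1, ih.2.1, h.2.2⟩

lemma inS.eraseNode {G : Episode α} (hG : inS G) (w : ℕ) : inS (G.eraseNode w) := by
  obtain ⟨hac, htc, hst⟩ := hG
  refine ⟨fun v hv => hac v (transGen_eraseNode hv).1, fun u v h => ?_, ?_⟩
  · obtain ⟨huv, hu, hv⟩ := transGen_eraseNode h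
    exact ⟨htc huv, hu, hv⟩
  · intro u hu v hv hne hlab
    rw [Episode.eraseNode, Finset.mem_erase] at hu hv
    rcases hst u hu.2 v hv.2 hne hlab with h | h
    · exact .inl (.single ⟨htc h, hu.1, hv.1⟩)
    · exact .inr (.single ⟨htc h, hv.1, hu.1⟩)

/-- `g` is a valid mapping of `G` into the suffix `s[t, L]` (in absolute positions of `s`). -/
def IsValidFrom (s : List α) (t : ℕ) (G : Episode α) (g : ℕ → ℕ) : Prop :=
  (∀ v ∈ G.nodes, t ≤ g v ∧ s[g v]? = some (G.lab v)) ∧ ∀ u v, G.edge u v → g u < g v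

namespace IsValidFrom

variable {s : List α} {t : ℕ} {G : Episode α} {g : ℕ → ℕ}

lemma mono (hg : IsValidFrom s t G g) {t' : ℕ} (ht : t' ≤ t) : IsValidFrom s t' G g :=
  ⟨fun v hv => ⟨ht.trans (hg.1 v hv).1, (hg.1 v hv).2⟩, hg.2⟩

lemma eraseNode (hg : IsValidFrom s t G g) {v t' : ℕ}
    (ht' : ∀ w ∈ G.nodes, w ≠ v → t' ≤ g w) : IsValidFrom s t' (G.eraseNode v) g := by
  refine ⟨fun w hw => ?_, fun u w h => hg.2 u w h.1⟩
  obtain ⟨hwv, hw⟩ := Finset.mem_erase.mp hw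
  exact ⟨ht' w hw hwv, (hg.1 w hw).2⟩

lemma le_of_forall_not_isSource (hg : IsValidFrom s t G g) {k : ℕ}
    (hk : ∀ j (hj : j < s.length), t ≤ j → j < k →
      ¬ ∃ w, G.IsSource w ∧ s.get ⟨j, hj⟩ = G.lab w) :
    ∀ w ∈ G.nodes, k ≤ g w := by
  by_contra! hlt
  obtain ⟨v₀, hv₀, hv₀k⟩ := hlt
  obtain ⟨w, hw, hwmin⟩ := (G.nodes.filter (g · < k)).exists_min_image g
    ⟨v₀, Finset.mem_filter.mpr ⟨hv₀, hv₀k⟩⟩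
  obtain ⟨hwG, hwk⟩ := Finset.mem_filter.mp hw
  have hsrc : G.IsSource w := by
    refine ⟨hwG, fun u hu => ?_⟩
    have huw := hg.2 u w hu
    exact huw.not_ge (hwmin u (Finset.mem_filter.mpr ⟨(G.edge_mem hu).1, huw.trans hwk⟩))
  obtain ⟨hlen, hlab⟩ := List.getElem?_eq_some_iff.mp (hg.1 w hwG).2
  exact hk (g w) hlen (hg.1 w hwG).1 hwk ⟨w, hsrc, hlab⟩

lemma lt_of_isSource (hG : inS G) (hg : IsValidFrom s t G g) {v k : ℕ} (hv : G.IsSource v)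
    (hk : k < s.length) (hlab : s.get ⟨k, hk⟩ = G.lab v) (hgk : ∀ w ∈ G.nodes, k ≤ g w) :
    ∀ w ∈ G.nodes, w ≠ v → k < g w := by
  intro w hw hwv
  refine (hgk w hw).lt_of_ne fun hkw => ?_
  have hw_src : G.IsSource w :=
    ⟨hw, fun u hu => (hg.2 u w hu).not_ge (hkw ▸ hgk u (G.edge_mem hu).1)⟩
  have hlab_eq : G.lab w = G.lab v := by
    have := (hg.1 w hw).2
    rw [← hkw, List.getElem?_eq_getElem hk] at this
    exact (Option.some.inj this).symm.trans hlab
  rcases hG.2.2 w hw v hv.1 hwv hlab_eq with h | h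
  · exact hv.2 w (hG.2.1 h)
  · exact hw_src.2 v (hG.2.1 h)

end IsValidFrom

namespace GreedyFrom

variable {s : List α} {t : ℕ} {G : Episode α} {m : ℕ → ℕ}

lemma isValidFrom (h : GreedyFrom s t G m) : IsValidFrom s t G m := by
  induction h with
  | empty t G f hG =>
    exact ⟨by simp [hG], fun u v h => absurd (G.edge_mem h).1 (by simp [hG])⟩
  | step t G f v k hv ht hk hlab _ hfv _ ih =>
    refine ⟨fun w hw => ?_, fun u w h => ?_⟩
    · by_cases hwv : w = v
      · subst hwv
        exact ⟨hfv ▸ ht, hfv ▸ List.getElem?_eq_some_iff.mpr ⟨hk, hlab⟩⟩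
      · obtain ⟨hkw, hlabw⟩ := ih.1 w (Finset.mem_erase.mpr ⟨hwv, hw⟩)
        exact ⟨by omega, hlabw⟩
    · have hwv : w ≠ v := fun hwv => hv.2 u (hwv ▸ h)
      by_cases huv : u = v
      · subst huv
        have := (ih.1 w (Finset.mem_erase.mpr ⟨hwv, (G.edge_mem h).2⟩)).1
        omega
      · exact ih.2 u w ⟨h, huv, hwv⟩

lemma le_of_isValidFrom (h : GreedyFrom s t G m) (hG : inS G) {g : ℕ → ℕ}
    (hg : IsValidFrom s t G g) : ∀ v ∈ G.nodes, m v ≤ g v := by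
  induction h generalizing g with
  | empty t G f hG' => simp [hG']
  | step t G f v k hv _ hk hlab hmin hfv _ ih =>
    have hgk := hg.le_of_forall_not_isSource hmin
    have hg' : IsValidFrom s (k + 1) (G.eraseNode v) g :=
      hg.eraseNode (hg.lt_of_isSource hG hv hk hlab hgk)
    intro w hw
    by_cases hwv : w = v
    · exact hwv ▸ hfv ▸ hgk v hv.1
    · exact ih (hG.eraseNode v) hg' w (Finset.mem_erase.mpr ⟨hwv, hw⟩)

end GreedyFrom

end Episode

open Episode in
theorem stmt8_general {α : Type*} (G : Episode α) (hG : inS G) (s : List α) (k : ℕ)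
    (m₁ m₂ : ℕ → ℕ) (h₁ : GreedyFrom s 0 G m₁) (h₂ : GreedyFrom s k G m₂) :
    ∀ v ∈ G.nodes, m₁ v ≤ m₂ v :=
  h₁.le_of_isValidFrom hG (h₂.isValidFrom.mono k.zero_le)

open Episode in
/-- Let `G` be a strict transitively closed episode covered by `s`, and let
`k` be an index such that the suffix `s[k+1, L]` also covers `G`.  If
`m₁ = g(G; s)` and `m₂ = g(G; s[k+1, L])` are the greedy mappings (taken as
maps into positions of `s`), then `m₂(v) ≥ m₁(v)` for every node `v`. -/
theorem stmt8 {α : Type*} (G : Episode α) (hG : inS G) (s : List α)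
    (hcov : Covers s G) (k : ℕ) (hcov' : Covers (s.drop k) G)
    (m₁ m₂ : ℕ → ℕ) (h₁ : GreedyFrom s 0 G m₁) (h₂ : GreedyFrom s k G m₂) :
    ∀ v ∈ G.nodes, m₁ v ≤ m₂ v :=
  stmt8_general G hG s k m₁ m₂ h₁ h₂
end
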